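/- arXiv:0710.0574 — 7 statements merged into one kernel-verified Lean document; each statement's English description precedes it below -/
import Mathlib

section
/- The bivariate Fibonacci polynomials satisfy the recurrence F̂_{2m+4} = (1+q+t)·F̂_{2m+2} − q·F̂_{2m} for all m ≥ 0. -/
/-!
Let `F(n, k)` be the same weighted sum over subsets of `{1, …, n}` without consecutive elements,
so that `F̂_{2k} = F(2k, k)`. Splitting off the subsets that contain `n + 2` (which then avoid
`n + 1`) gives `F(n + 2, k + 1) = F(n + 1, k + 1) + w · F(n, k)`, with `w = q` for even `n` and
`w = 1` for odd `n`. Applying this at `n = 2m + 2, 2m + 1, 2m` and using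
`F(2m + 2, m + 2) = t · F(2m + 2, m + 1)`, valid because such subsets of `{1, …, 2m + 2}` have
at most `m + 1` elements, eliminates the odd-length terms.
-/

/-- The bivariate Fibonacci polynomial `F̂_{2k}(q,t)`: the sum over subsets `S` of
`{1,…,2k}` containing no two consecutive elements of
`q^(#even elements of S) · t^(k − |S|)`. -/
def FhatSub (q t : ℤ) (k : ℕ) : ℤ :=
  ∑ S ∈ (Finset.Icc 1 (2 * k)).powerset.filter (fun S => ∀ i ∈ S, i + 1 ∉ S),
    q ^ (S.filter (fun i => Even i)).card * t ^ (k - S.card)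

open Finset

namespace FhatSub

def indepSets (n : ℕ) : Finset (Finset ℕ) :=
  (Icc 1 n).powerset.filter (fun S => ∀ i ∈ S, i + 1 ∉ S)

lemma noConsecutive_insert_iff {S : Finset ℕ} {a : ℕ} (hS : ∀ i ∈ S, i + 1 < a) :
    (∀ i ∈ insert a S, i + 1 ∉ insert a S) ↔ ∀ i ∈ S, i + 1 ∉ S := by
  simp only [mem_insert, forall_eq_or_imp]
  constructor
  · intro h i hi hi1
    exact h.2 i hi (Or.inr hi1)
  · intro h
    refine ⟨?_, fun i hi => ?_⟩
    · rintro (h1 | h1)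
      · omega
      · have := hS _ h1; omega
    · rintro (h1 | h1)
      · have := hS _ hi; omega
      · exact h i hi h1

lemma Icc_one_add_one (n : ℕ) : Icc 1 (n + 1) = insert (n + 1) (Icc 1 n) :=
  (insert_Icc_right_eq_Icc_add_one (by omega)).symm

lemma sum_indepSets_add_two {M : Type*} [AddCommMonoid M] (g : Finset ℕ → M) (n : ℕ) :
    ∑ S ∈ indepSets (n + 2), g S =
      ∑ S ∈ indepSets (n + 1), g S + ∑ S ∈ indepSets n, g (insert (n + 2) S) := by
  simp only [indepSets, sum_filter]
  rw [Icc_one_add_one (n + 1), sum_powerset_insert (by simp)]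
  congr 1
  rw [Icc_one_add_one n, sum_powerset_insert (by simp)]
  have hblocked : ∀ S ∈ (Icc 1 n).powerset,
      (if ∀ i ∈ insert (n + 2) (insert (n + 1) S), i + 1 ∉ insert (n + 2) (insert (n + 1) S)
        then g (insert (n + 2) (insert (n + 1) S)) else 0) = 0 :=
    fun S _ => if_neg fun h => h (n + 1) (by simp) (by simp)
  rw [sum_eq_zero hblocked, add_zero]
  refine sum_congr rfl fun S hS => if_congr ?_ rfl rfl
  exact noConsecutive_insert_iff fun i hi => by have := mem_Icc.mp (mem_powerset.mp hS hi); omega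

lemma two_mul_card_le {n : ℕ} {S : Finset ℕ} (hS : S ∈ indepSets n) : 2 * S.card ≤ n + 1 := by
  simp only [indepSets, mem_filter, mem_powerset] at hS
  obtain ⟨hsub, hsep⟩ := hS
  -- `i ↦ ⌈i / 2⌉` only identifies consecutive integers
  have hinj : Set.InjOn (fun i => (i + 1) / 2) S := by
    intro i hi j hj hij
    by_contra hne
    rcases lt_or_gt_of_ne hne with h | h
    · exact hsep i hi (by rwa [show i + 1 = j by simp at hij; omega])
    · exact hsep j hj (by rwa [show j + 1 = i by simp at hij; omega])
  have hmaps : Set.MapsTo (fun i => (i + 1) / 2) S (Icc 1 ((n + 1) / 2)) := by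
    intro i hi
    have := mem_Icc.mp (hsub hi)
    simp only [coe_Icc, Set.mem_Icc]
    omega
  have := card_le_card_of_injOn _ hmaps hinj
  rw [Nat.card_Icc] at this
  omega

def fibSum (q t : ℤ) (n k : ℕ) : ℤ :=
  ∑ S ∈ indepSets n, q ^ (S.filter Even).card * t ^ (k - S.card)

lemma fibSum_add_two (q t : ℤ) (n k : ℕ) :
    fibSum q t (n + 2) (k + 1) =
      fibSum q t (n + 1) (k + 1) + (if Even n then q else 1) * fibSum q t n k := by
  rw [fibSum, sum_indepSets_add_two, fibSum, fibSum, mul_sum]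
  congr 1
  refine sum_congr rfl fun S hS => ?_
  have hnotin : n + 2 ∉ S := fun h => by
    simp only [indepSets, mem_filter, mem_powerset] at hS
    have := mem_Icc.mp (hS.1 h); omega
  have heven : Even (n + 2) ↔ Even n := Nat.even_add.trans (by simp)
  rw [card_insert_of_notMem hnotin, Nat.add_sub_add_right, filter_insert]
  by_cases hn : Even n
  · rw [if_pos (heven.mpr hn), if_pos hn,
      card_insert_of_notMem fun h => hnotin (mem_filter.mp h).1, pow_succ]
    ring
  · rw [if_neg (mt heven.mp hn), if_neg hn, one_mul]

lemma fibSum_succ_right (q t : ℤ) {n k : ℕ} (hnk : n ≤ 2 * k) :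
    fibSum q t n (k + 1) = t * fibSum q t n k := by
  rw [fibSum, fibSum, mul_sum]
  refine sum_congr rfl fun S hS => ?_
  have := two_mul_card_le hS
  rw [Nat.sub_add_comm (by omega), pow_succ]
  ring

end FhatSub

open FhatSub in
/-- The bivariate Fibonacci polynomials satisfy
`F̂_{2m+4} = (1+q+t)·F̂_{2m+2} − q·F̂_{2m}` for all `m ≥ 0`. -/
theorem fhatSub_recurrence (q t : ℤ) (m : ℕ) :
    FhatSub q t (m + 2) = (1 + q + t) * FhatSub q t (m + 1) - q * FhatSub q t m := by
  have hev : Even (2 * m) := even_two_mul m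
  have hodd : ¬Even (2 * m + 1) := Nat.not_even_two_mul_add_one m
  have hev' : Even (2 * m + 2) := ⟨m + 1, by ring⟩
  have h1 : fibSum q t (2 * m + 4) (m + 2) =
      fibSum q t (2 * m + 3) (m + 2) + q * fibSum q t (2 * m + 2) (m + 1) := by
    rw [fibSum_add_two, if_pos hev']
  have h2 : fibSum q t (2 * m + 3) (m + 2) =
      fibSum q t (2 * m + 2) (m + 2) + fibSum q t (2 * m + 1) (m + 1) := by
    rw [fibSum_add_two, if_neg hodd, one_mul]
  have h3 : fibSum q t (2 * m + 2) (m + 1) =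
      fibSum q t (2 * m + 1) (m + 1) + q * fibSum q t (2 * m) m := by
    rw [fibSum_add_two, if_pos hev]
  have h4 : fibSum q t (2 * m + 2) (m + 2) = t * fibSum q t (2 * m + 2) (m + 1) :=
    fibSum_succ_right q t (by omega)
  show fibSum q t (2 * m + 4) (m + 2) =
    (1 + q + t) * fibSum q t (2 * m + 2) (m + 1) - q * fibSum q t (2 * m) m
  linear_combination h1 + h2 + h4 - h3
end

section
/- Counting binary chains: the number of sequences of length 2m+4 over {black, white} with no two consecutive black beads, weighted by q to the power of the number of black beads in even positions and t to the power of (m+2 minus the number of black beads), equals (1+q+t) times the analogous weighted count for length 2m+2 minus q times the count for length 2m. -/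
/-!
Cut a chain of `2k` beads into `k` consecutive pairs. A pair holds at most one black bead, so
`k - |S|` is the number of white–white pairs and the weight is the product of the pair weights
`WW ↦ t`, `BW ↦ 1`, `WB ↦ q`. Writing `C_k(s)` for the weighted count of chains that may follow a
bead of colour `s`, peeling off the first pair gives the transfer relations
`C_{k+1}(W) = (1 + t) C_k(W) + q C_k(B)` and `C_{k+1}(B) = t C_k(W) + q C_k(B)`;
their difference `C_{k+1}(W) - C_{k+1}(B) = C_k(W)` eliminates `C(B)`.
-/

/-- Weighted count of chains of `n = 2k` beads (functions `{1,…,2k} → Bool`,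
`true` = black) with no two consecutive black beads, where a chain with black
set `S` has weight `q^(#black beads in even positions) · t^(k − #black beads)`.
Position of index `i : Fin (2k)` is `i + 1`. -/
def chainSum (q t : ℤ) (k : ℕ) : ℤ :=
  ∑ f ∈ (Finset.univ : Finset (Fin (2 * k) → Bool)).filter
      (fun f => ∀ i j : Fin (2 * k), (j : ℕ) = (i : ℕ) + 1 → f i = true → f j = false),
    q ^ (Finset.univ.filter (fun i : Fin (2 * k) => f i = true ∧ Even ((i : ℕ) + 1))).card *
      t ^ (k - (Finset.univ.filter (fun i : Fin (2 * k) => f i = true)).card)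

open Finset

namespace BeadChain

section Tuples

variable {α : Type*} {n : ℕ}

def IsAdmissible (f : Fin n → Bool) : Prop :=
  ∀ i j : Fin n, (j : ℕ) = (i : ℕ) + 1 → f i = true → f j = false

instance : DecidablePred (IsAdmissible (n := n)) := fun _ => by
  unfold IsAdmissible; infer_instance

theorem isAdmissible_cons {a : Bool} {f : Fin n → Bool} :
    IsAdmissible (Fin.cons a f : Fin (n + 1) → Bool) ↔
      (∀ h : 0 < n, a = true → f ⟨0, h⟩ = false) ∧ IsAdmissible f := by
  constructor
  · intro H
    exact ⟨fun h ha => H 0 ⟨1, by omega⟩ rfl ha,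
      fun i j hij hi => H i.succ j.succ (by simp [hij]) hi⟩
  · rintro ⟨hhead, htail⟩ i j hij hi
    induction i using Fin.cases with
    | zero =>
      obtain ⟨_ | j, hj⟩ := j
      · simp at hij
      · obtain rfl : j = 0 := by simpa using hij
        exact hhead (by omega) hi
    | succ i =>
      induction j using Fin.cases with
      | zero => simp at hij
      | succ j => exact htail i j (by simpa using hij) hi

theorem isAdmissible_cons_false {f : Fin n → Bool} :
    IsAdmissible (Fin.cons false f : Fin (n + 1) → Bool) ↔ IsAdmissible f := by
  simp [isAdmissible_cons]

theorem isAdmissible_cons_cons {a b : Bool} {g : Fin n → Bool} :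
    IsAdmissible (Fin.cons a (Fin.cons b g) : Fin (n + 2) → Bool) ↔
      (a = true → b = false) ∧ IsAdmissible (Fin.cons b g : Fin (n + 1) → Bool) := by
  rw [isAdmissible_cons]
  have hb : ∀ h : 0 < n + 1, (Fin.cons b g : Fin (n + 1) → Bool) ⟨0, h⟩ = b := fun _ => rfl
  simp only [hb]
  exact and_congr_left' ⟨fun h => h (by omega), fun h _ => h⟩

theorem sum_fin_cons_cons {M : Type*} [AddCommMonoid M] [Fintype α] [DecidableEq α]
    (F : (Fin (n + 2) → α) → M) :
    ∑ f, F f = ∑ a, ∑ b, ∑ g : Fin n → α, F (Fin.cons a (Fin.cons b g)) := by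
  have sum_cons : ∀ {m : ℕ} (G : (Fin (m + 1) → α) → M),
      ∑ f, G f = ∑ a, ∑ g : Fin m → α, G (Fin.cons a g) := fun G => by
    rw [← (Fin.consEquiv fun _ => α).sum_comp, Fintype.sum_prod_type]
    rfl
  simp only [sum_cons]

def blackCount (f : Fin n → Bool) : ℕ := #{i | f i = true}

def evenBlackCount (f : Fin n → Bool) : ℕ := #{i | f i = true ∧ Even ((i : ℕ) + 1)}

theorem blackCount_cons (a : Bool) (f : Fin n → Bool) :
    blackCount (Fin.cons a f : Fin (n + 1) → Bool) = a.toNat + blackCount f := by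
  simp only [blackCount, card_filter, Fin.sum_univ_succ, Fin.cons_zero, Fin.cons_succ]
  cases a <;> simp

theorem evenBlackCount_cons_cons (a b : Bool) (g : Fin n → Bool) :
    evenBlackCount (Fin.cons a (Fin.cons b g) : Fin (n + 2) → Bool) =
      b.toNat + evenBlackCount g := by
  simp only [evenBlackCount, card_filter, Fin.sum_univ_succ, Fin.cons_zero, Fin.cons_succ,
    Fin.val_succ, Fin.val_zero]
  cases b <;> simp [Nat.even_add_one, parity_simps]

theorem blackCount_le_of_isAdmissible {k : ℕ} {f : Fin (2 * k) → Bool} (hf : IsAdmissible f) :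
    blackCount f ≤ k := by
  have hinj : Set.InjOn (fun i : Fin (2 * k) => (i : ℕ) / 2) {i | f i = true} := by
    intro i (hi : f i = true) j (hj : f j = true) (hij : (i : ℕ) / 2 = j / 2)
    by_contra hne
    rcases (by omega : (j : ℕ) = i + 1 ∨ (i : ℕ) = j + 1) with h | h
    · simp [hf i j h hi] at hj
    · simp [hf j i h hj] at hi
  simpa [blackCount] using card_le_card_of_injOn (t := range k)
    (fun i : Fin (2 * k) => (i : ℕ) / 2) (fun i _ => by simp only [coe_range, Set.mem_Iio]; omega)
    (by simpa using hinj)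

end Tuples

def weight (q t : ℤ) (k : ℕ) (f : Fin (2 * k) → Bool) : ℤ :=
  q ^ evenBlackCount f * t ^ (k - blackCount f)

-- The value at `(true, true)` is irrelevant: that pair never occurs in an admissible chain.
def pairWeight (q t : ℤ) : Bool → Bool → ℤ
  | false, false => t
  | true, false => 1
  | _, true => q

theorem weight_cons_cons (q t : ℤ) {k : ℕ} {a b : Bool} (hab : a = true → b = false)
    {g : Fin (2 * k) → Bool} (hg : IsAdmissible g) :
    weight q t (k + 1) (Fin.cons a (Fin.cons b g)) = pairWeight q t a b * weight q t k g := by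
  have hle := blackCount_le_of_isAdmissible hg
  have hexp : k + 1 - (a.toNat + (b.toNat + blackCount g)) =
      (1 - (a.toNat + b.toNat)) + (k - blackCount g) := by
    cases a <;> cases b <;> simp at hab ⊢ <;> omega
  rw [weight, weight, blackCount_cons, blackCount_cons, evenBlackCount_cons_cons, hexp, pow_add,
    pow_add]
  cases a <;> cases b <;> simp [pairWeight] at hab ⊢ <;> ring

/-- Weighted count of the chains that may follow a bead of colour `s`. -/
def chainSumAfter (q t : ℤ) (k : ℕ) (s : Bool) : ℤ :=
  ∑ f ∈ univ.filter
      (fun f : Fin (2 * k) → Bool => IsAdmissible (Fin.cons s f : Fin (2 * k + 1) → Bool)),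
    weight q t k f

theorem chainSum_eq_chainSumAfter_false (q t : ℤ) (k : ℕ) :
    chainSum q t k = chainSumAfter q t k false := by
  simp only [chainSumAfter, isAdmissible_cons_false]
  rfl

theorem chainSumAfter_succ (q t : ℤ) (k : ℕ) (s : Bool) :
    chainSumAfter q t (k + 1) s = ∑ a, ∑ b,
      if (s = true → a = false) ∧ (a = true → b = false) then
        pairWeight q t a b * chainSumAfter q t k b
      else 0 := by
  rw [chainSumAfter, sum_filter]
  refine (sum_fin_cons_cons (n := 2 * k) _).trans ?_
  refine sum_congr rfl fun a _ => sum_congr rfl fun b _ => ?_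
  simp only [isAdmissible_cons_cons]
  split_ifs with hsab
  · rw [chainSumAfter, sum_filter, mul_sum]
    refine sum_congr rfl fun g _ => ?_
    simp only [← and_assoc, and_iff_right hsab]
    split_ifs with hg
    · exact weight_cons_cons q t hsab.2 (isAdmissible_cons.1 hg).2
    · exact (mul_zero _).symm
  · exact sum_eq_zero fun g _ => if_neg fun h => hsab ⟨h.1, h.2.1⟩

theorem chainSumAfter_succ_false (q t : ℤ) (k : ℕ) :
    chainSumAfter q t (k + 1) false =
      (1 + t) * chainSumAfter q t k false + q * chainSumAfter q t k true := by
  simp [chainSumAfter_succ, pairWeight]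
  ring

theorem chainSumAfter_succ_true (q t : ℤ) (k : ℕ) :
    chainSumAfter q t (k + 1) true =
      t * chainSumAfter q t k false + q * chainSumAfter q t k true := by
  simp [chainSumAfter_succ, pairWeight, add_comm]

end BeadChain

open BeadChain in
/-- The weighted count of black/white chains of length `2m+4` with no two
consecutive black beads equals `(1+q+t)` times the count for length `2m+2`
minus `q` times the count for length `2m`. -/
theorem chainSum_recurrence (q t : ℤ) (m : ℕ) :
    chainSum q t (m + 2) = (1 + q + t) * chainSum q t (m + 1) - q * chainSum q t m := by
  simp only [chainSum_eq_chainSumAfter_false]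
  linear_combination chainSumAfter_succ_false q t (m + 1) -
    q * (chainSumAfter_succ_false q t m - chainSumAfter_succ_true q t m)
end

section
/- Let L₀ be the k×k reduced Laplacian of the (q,t)-wheel graph, i.e., the circulant matrix circ(1+q+t, −q, 0, ..., 0, −1) for k ≥ 3 (with appropriate degenerate versions for k = 1, 2). Then det L₀ equals the weighted spanning-tree polynomial 𝒲_k(q,t) = Σ over spanning trees T of the wheel graph W_k of q^(dist(T))·t^(#spokes(T)). -/
/-- The `k×k` reduced Laplacian of the `(q,t)`-wheel graph: the circulant matrix
`circ(1+q+t, −q, 0, …, 0, −1)`, with `−q` one step clockwise and `−1` one step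
counterclockwise of the diagonal (with wraparound). -/
def wheelLap (q t : ℤ) (k : ℕ) [NeZero k] : Matrix (ZMod k) (ZMod k) ℤ :=
  Matrix.of fun i j =>
    if j = i then 1 + q + t else if j = i + 1 then -q else if j = i - 1 then -1 else 0

/-- The weighted spanning-tree polynomial `𝒲_k(q,t)` of the wheel graph `W_k`.
A spanning tree is encoded by a function `f : ZMod k → Fin 3` telling how each
rim vertex starts its path to the hub: `0` = via its spoke, `1` = via the
clockwise rim edge to `v+1`, `2` = via the counterclockwise rim edge to `v−1`.
The conditions (some spoke exists, and no two adjacent vertices point at each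
other) characterize exactly the spanning trees: disjoint rim arcs, each attached
to the hub by one spoke.  The weight is `q^(dist T) · t^(#spokes T)`, where
`dist T` is the number of rim edges traversed clockwise (those lying on the
clockwise side of the spoke of their arc) and `#spokes T` the number of spokes. -/
def wheelTreeSum (q t : ℤ) (k : ℕ) [NeZero k] : ℤ :=
  ∑ f ∈ (Finset.univ : Finset (ZMod k → Fin 3)).filter
      (fun f => (∃ v, f v = 0) ∧ ∀ v, ¬(f v = 1 ∧ f (v + 1) = 2)),
    q ^ (Finset.univ.filter (fun v => f v = 1)).card *
      t ^ (Finset.univ.filter (fun v => f v = 0)).card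

/-!
Write `1 + q + t = α + β` and `q = α β` over `ℂ`, and let `P` be the permutation matrix of the
rotation `v ↦ v + 1` of the rim. Then `L₀ = (α + β) - α β P - P⁻¹ = (α P - 1)(P⁻¹ - β)`, and in the
Leibniz expansion of `det (a + b P)` only the identity and the full cycle survive, so
`det (a + b P) = a ^ k + sign P · b ^ k`. Multiplying out, `det L₀ = α ^ k + β ^ k - q ^ k - 1`.

On the other side, the encodings `f : ZMod k → Fin 3` avoiding the forbidden pattern are the
closed walks of length `k` of nonzero weight for a `3 × 3` transfer matrix `T`, and the only
ones without a spoke are the two constant encodings, of weights `q ^ k` and `1`; hence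
`𝒲_k = tr T ^ k - q ^ k - 1`. Since `T ^ 3 = (1 + q + t) T ^ 2 - q T`, the traces
`tr T ^ k` satisfy the recurrence of `α ^ k + β ^ k`, with the same initial values.
-/

open Finset Matrix Equiv Equiv.Perm

namespace Equiv.Perm

variable {α : Type*} [Finite α] {σ : Perm α}

theorem IsCycle.forall_of_imp_apply (hσ : σ.IsCycle) (hfix : ∀ x, σ x ≠ x) {p : α → Prop}
    (hp : ∀ x, p x → p (σ x)) {x₀ : α} (h₀ : p x₀) (x : α) : p x := by
  obtain ⟨i, rfl⟩ := hσ.exists_pow_eq (hfix x₀) (hfix x)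
  induction i with
  | zero => exact h₀
  | succ i ih => rw [pow_succ', Perm.mul_apply]; exact hp _ ih

theorem IsCycle.eq_one_or_eq_inv_of_forall (hσ : σ.IsCycle) (hfix : ∀ x, σ x ≠ x)
    {π : Perm α} (h : ∀ x, π x = x ∨ σ (π x) = x) : π = 1 ∨ π = σ⁻¹ := by
  by_cases hπ : ∀ x, π x = x
  · exact .inl (Equiv.ext hπ)
  obtain ⟨x₀, hx₀⟩ := not_forall.mp hπ
  have hfix' : ∀ x, σ⁻¹ x ≠ x := fun x hx => hfix x (inv_eq_iff_eq.mp hx).symm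
  have hmoved : ∀ x, π x ≠ x → π (σ⁻¹ x) ≠ σ⁻¹ x := fun x hx hx' => by
    have hπx : π x = σ⁻¹ x := eq_inv_iff_eq.mpr ((h x).resolve_left hx)
    exact hfix' x (π.injective (hx'.trans hπx.symm))
  refine .inr (Equiv.ext fun x => ?_)
  exact eq_inv_iff_eq.mpr ((h x).resolve_left (hσ.inv.forall_of_imp_apply hfix' hmoved hx₀ x))

end Equiv.Perm

theorem ZMod.isCycle_addRight_one {k : ℕ} [Nontrivial (ZMod k)] :
    (Equiv.addRight (1 : ZMod k)).IsCycle :=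
  ⟨0, by simp, fun y _ => ⟨(y.cast : ℤ), by simp⟩⟩

theorem Fin.cons_add_one {m : Type*} {k : ℕ} (a : m) (f : Fin k → m) (i : Fin (k + 1)) :
    (Fin.cons a f : Fin (k + 1) → m) (i + 1) = (Fin.snoc f a : Fin (k + 1) → m) i := by
  induction i using Fin.lastCases with
  | last => simp
  | cast j => simp [Fin.coeSucc_eq_succ]

theorem exists_add_eq_and_mul_eq {K : Type*} [Field K] [IsAlgClosed K] [NeZero (2 : K)]
    (s p : K) : ∃ α β : K, α + β = s ∧ α * β = p := by
  obtain ⟨d, hd⟩ := IsAlgClosed.exists_eq_mul_self (s ^ 2 - 4 * p)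
  refine ⟨(s + d) / 2, (s - d) / 2, by field_simp; ring, ?_⟩
  field_simp
  linear_combination hd

theorem eq_mul_pow_add_mul_pow_of_rec {R : Type*} [CommRing R] {u : ℕ → R} {α β a b : R}
    (h0 : u 0 = a + b) (h1 : u 1 = a * α + b * β)
    (hrec : ∀ n, u (n + 2) = (α + β) * u (n + 1) - α * β * u n) (n : ℕ) :
    u n = a * α ^ n + b * β ^ n := by
  induction n using Nat.twoStepInduction with
  | zero => simpa using h0
  | one => simpa using h1
  | more n ih ih' => rw [hrec, ih, ih']; ring

namespace Matrix

section Cycle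

variable {n R : Type*} [Fintype n] [DecidableEq n] [CommRing R] {σ : Perm n}

theorem det_smul_one_add_smul_permMatrix (hσ : σ.IsCycle) (hfix : ∀ x, σ x ≠ x) (a b : R) :
    det (a • 1 + b • σ.permMatrix R) = a ^ Fintype.card n + sign σ * b ^ Fintype.card n := by
  rw [det_apply, Fintype.sum_eq_add 1 σ⁻¹ (Ne.symm (inv_ne_one.mpr hσ.ne_one))]
  · have hfix' : ∀ x, σ.symm x ≠ x := fun x hx => hfix x (σ.symm_apply_eq.mp hx).symm
    simp [hfix, hfix', Units.smul_def]
  · rintro π ⟨hπ1, hπinv⟩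
    obtain ⟨i, hi⟩ : ∃ i, π i ≠ i ∧ σ (π i) ≠ i := by
      by_contra! h
      exact (hσ.eq_one_or_eq_inv_of_forall hfix fun x => or_iff_not_imp_left.mpr (h x)).elim
        hπ1 hπinv
    rw [prod_eq_zero (mem_univ i) (by simp [hi.1, hi.2]), smul_zero]

theorem det_smul_one_sub_smul_permMatrix_sub_permMatrix_inv (hσ : σ.IsCycle)
    (hfix : ∀ x, σ x ≠ x) (α β : R) :
    det ((α + β) • 1 - (α * β) • σ.permMatrix R - σ⁻¹.permMatrix R) =
      α ^ Fintype.card n + β ^ Fintype.card n - (α * β) ^ Fintype.card n - 1 := by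
  have hinv : σ.permMatrix R * σ⁻¹.permMatrix R = 1 := by
    rw [← permMatrix_mul, inv_mul_cancel, permMatrix_one]
  have hfactor : (α + β) • 1 - (α * β) • σ.permMatrix R - σ⁻¹.permMatrix R =
      ((-1 : R) • 1 + α • σ.permMatrix R) * ((-β) • 1 + (1 : R) • σ⁻¹.permMatrix R) := by
    simp only [add_mul, mul_add, smul_mul_smul, one_mul, mul_one, hinv]
    module
  have hfix' : ∀ x, σ⁻¹ x ≠ x := fun x hx => hfix x (inv_eq_iff_eq.mp hx).symm
  have hsupp : σ.support = univ := eq_univ_of_forall fun x => mem_support.mpr (hfix x)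
  have hsq : ((-1 : R) ^ Fintype.card n) ^ 2 = 1 := by rw [← pow_mul, mul_comm, pow_mul]; simp
  rw [hfactor, det_mul, det_smul_one_add_smul_permMatrix hσ hfix,
    det_smul_one_add_smul_permMatrix hσ.inv hfix', sign_inv, hσ.sign, hsupp, card_univ]
  push_cast
  rw [neg_pow β, mul_pow]
  linear_combination (1 - α ^ Fintype.card n) * (β ^ Fintype.card n - 1) * hsq

end Cycle

section Walks

variable {m R : Type*} [Fintype m] [DecidableEq m] [CommSemiring R]

theorem pow_succ_apply_eq_sum_prod (T : Matrix m m R) (k : ℕ) (a b : m) :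
    (T ^ (k + 1)) a b = ∑ f : Fin k → m,
      ∏ i, T ((Fin.cons a f : Fin (k + 1) → m) i) ((Fin.snoc f b : Fin (k + 1) → m) i) := by
  induction k generalizing a with
  | zero => simp [Fin.snoc]
  | succ k ih =>
    rw [pow_succ', mul_apply, ← (Fin.consEquiv fun _ => m).sum_comp, Fintype.sum_prod_type]
    refine sum_congr rfl fun c _ => ?_
    rw [ih, mul_sum]
    refine sum_congr rfl fun f _ => ?_
    rw [Fin.prod_univ_succ (n := k + 1)]
    simp only [Fin.consEquiv, Equiv.coe_fn_mk, ← Fin.cons_snoc_eq_snoc_cons, Fin.cons_zero,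
      Fin.cons_succ]

theorem trace_pow_succ_eq_sum_prod (T : Matrix m m R) (k : ℕ) :
    trace (T ^ (k + 1)) = ∑ f : Fin (k + 1) → m, ∏ i, T (f i) (f (i + 1)) := by
  rw [← (Fin.consEquiv fun _ => m).sum_comp, Fintype.sum_prod_type]
  simp [trace, pow_succ_apply_eq_sum_prod, Fin.cons_add_one]

theorem trace_pow_eq_sum_prod_zmod (T : Matrix m m R) (k : ℕ) [NeZero k] :
    trace (T ^ k) = ∑ f : ZMod k → m, ∏ v, T (f v) (f (v + 1)) := by
  obtain ⟨n, rfl⟩ := Nat.exists_eq_succ_of_ne_zero (NeZero.ne k)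
  exact trace_pow_succ_eq_sum_prod T n

end Walks

end Matrix

theorem wheelLap_map_eq {R : Type*} [CommRing R] (q t : ℤ) {k : ℕ} [NeZero k] (hk : 3 ≤ k)
    {α β : R} (hs : α + β = 1 + q + t) (hp : α * β = q) :
    (wheelLap q t k).map (Int.cast : ℤ → R) =
      (α + β) • 1 - (α * β) • (Equiv.addRight (1 : ZMod k)).permMatrix R -
        (Equiv.addRight (1 : ZMod k))⁻¹.permMatrix R := by
  have hne : ∀ n : ℕ, 0 < n → n < k → (n : ZMod k) ≠ 0 := fun n hn0 hnk =>
    (ZMod.natCast_eq_zero_iff n k).not.mpr (Nat.not_dvd_of_pos_of_lt hn0 hnk)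
  have h1 : (1 : ZMod k) ≠ 0 := by exact_mod_cast hne 1 one_pos (by omega)
  have h2 : (2 : ZMod k) ≠ 0 := by exact_mod_cast hne 2 two_pos (by omega)
  have hn : (-1 : ZMod k) ≠ 1 := fun h => h2 (by linear_combination -h)
  ext i j
  rcases eq_or_ne j i with rfl | h0
  · simp [wheelLap, h1, hs]
  rcases eq_or_ne j (i + 1) with rfl | h0'
  · simp [wheelLap, h1, hn, hp]
  rcases eq_or_ne j (i - 1) with rfl | h0''
  · simp [wheelLap, h1, hn, hn.symm, sub_eq_add_neg]
  simp [wheelLap, h0, h0', h0'', Ne.symm h0, Ne.symm h0', Ne.symm h0'', ← sub_eq_add_neg]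

/-- Row `a` is the state of a rim vertex and column `b` that of its clockwise neighbour, in the
encoding of `wheelTreeSum`: the entry is the weight `t`, `q`, `1` of state `a`, except that the
pattern `1, 2` (two neighbours pointing at each other) is forbidden. -/
def wheelTransfer (q t : ℤ) : Matrix (Fin 3) (Fin 3) ℤ :=
  !![t, t, t; q, q, 0; 1, 1, 1]

section Transfer

variable (q t : ℤ)

theorem wheelTransfer_apply (a b : Fin 3) :
    wheelTransfer q t a b = if a = 1 ∧ b = 2 then 0 else ![t, q, 1] a := by
  fin_cases a <;> fin_cases b <;> rfl

theorem trace_wheelTransfer : trace (wheelTransfer q t) = 1 + q + t := by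
  simp [wheelTransfer, trace_fin_three]; ring

theorem trace_wheelTransfer_sq : trace (wheelTransfer q t ^ 2) = (1 + q + t) ^ 2 - 2 * q := by
  simp [wheelTransfer, trace_fin_three, sq]; ring

theorem wheelTransfer_pow_three :
    wheelTransfer q t ^ 3 = (1 + q + t) • wheelTransfer q t ^ 2 - q • wheelTransfer q t := by
  simp only [wheelTransfer, pow_succ, pow_zero, one_mul, mul_fin_three, smul_of]
  ext i j
  fin_cases i <;> fin_cases j <;> simp <;> ring

theorem trace_wheelTransfer_pow_eq_add_pow {R : Type*} [CommRing R] {α β : R}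
    (hs : α + β = 1 + q + t) (hp : α * β = q) {k : ℕ} (hk : k ≠ 0) :
    ((trace (wheelTransfer q t ^ k) : ℤ) : R) = α ^ k + β ^ k := by
  obtain ⟨n, rfl⟩ := Nat.exists_eq_succ_of_ne_zero hk
  have hrec : ∀ n, trace (wheelTransfer q t ^ (n + 3)) =
      (1 + q + t) * trace (wheelTransfer q t ^ (n + 2)) -
        q * trace (wheelTransfer q t ^ (n + 1)) := by
    intro n
    rw [pow_add _ n 3, wheelTransfer_pow_three, mul_sub, mul_smul_comm, mul_smul_comm, ← pow_add,
      ← pow_succ, trace_sub, trace_smul, trace_smul, smul_eq_mul, smul_eq_mul]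
  have hpow := eq_mul_pow_add_mul_pow_of_rec
    (u := fun n => ((trace (wheelTransfer q t ^ (n + 1)) : ℤ) : R)) (α := α) (β := β)
    (a := α) (b := β) ?_ ?_ ?_ n
  · simpa [pow_succ'] using hpow
  · simp [trace_wheelTransfer, hs]
  · simp [trace_wheelTransfer_sq]; linear_combination -(α + β + 1 + q + t) * hs + 2 * hp
  · intro n; simp [hrec, hs, hp]

variable {k : ℕ} [NeZero k]

theorem prod_wheelTransfer (f : ZMod k → Fin 3) :
    ∏ v, wheelTransfer q t (f v) (f (v + 1)) =
      if ∀ v, ¬(f v = 1 ∧ f (v + 1) = 2) then q ^ #{v | f v = 1} * t ^ #{v | f v = 0} else 0 := by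
  split_ifs with hvalid
  · calc ∏ v, wheelTransfer q t (f v) (f (v + 1)) = ∏ v, ![t, q, 1] (f v) :=
          prod_congr rfl fun v _ => by rw [wheelTransfer_apply, if_neg (hvalid v)]
      _ = q ^ #{v | f v = 1} * t ^ #{v | f v = 0} := by
          rw [← prod_fiberwise' univ f]
          simp [Fin.prod_univ_three, mul_comm]
  · obtain ⟨v, hv⟩ := not_forall_not.mp hvalid
    exact prod_eq_zero (mem_univ v) (by rw [wheelTransfer_apply, if_pos hv])

theorem eq_const_one_or_two_of_forall_ne_zero [Nontrivial (ZMod k)] {f : ZMod k → Fin 3}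
    (hvalid : ∀ v, ¬(f v = 1 ∧ f (v + 1) = 2)) (hspoke : ∀ v, f v ≠ 0) :
    f = (fun _ => 1) ∨ f = (fun _ => 2) := by
  by_cases h1 : ∃ v, f v = 1
  · obtain ⟨v₀, hv₀⟩ := h1
    refine .inl (funext fun v => ZMod.isCycle_addRight_one.forall_of_imp_apply (by simp)
      (p := fun v => f v = 1) (fun v hv => ?_) hv₀ v)
    have := hvalid v
    have := hspoke (v + 1)
    simp only [coe_addRight]
    omega
  · refine .inr (funext fun v => ?_)
    have := hspoke v
    have := not_exists.mp h1 v
    omega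

theorem trace_wheelTransfer_pow_eq_treeSum [Nontrivial (ZMod k)] :
    trace (wheelTransfer q t ^ k) = wheelTreeSum q t k + q ^ k + 1 := by
  rw [trace_pow_eq_sum_prod_zmod]
  simp only [prod_wheelTransfer]
  rw [← sum_filter, ← sum_filter_add_sum_filter_not _ (fun f => ∃ v, f v = 0), filter_filter,
    filter_filter]
  have hconst : ({f | (∀ v, ¬(f v = 1 ∧ f (v + 1) = 2)) ∧ ¬∃ v, f v = 0} :
      Finset (ZMod k → Fin 3)) = {fun _ => 1, fun _ => 2} := by
    ext f
    simp only [mem_filter, mem_univ, true_and, mem_insert, mem_singleton, not_exists]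
    constructor
    · exact fun ⟨hvalid, hspoke⟩ => eq_const_one_or_two_of_forall_ne_zero hvalid hspoke
    · rintro (rfl | rfl) <;> simp
  have hne : (fun _ => 1 : ZMod k → Fin 3) ≠ fun _ => 2 := fun h => by simpa using congrFun h 0
  rw [hconst, sum_pair hne, wheelTreeSum]
  simp [and_comm, add_assoc]

end Transfer

/-- The determinant of the reduced Laplacian of the `(q,t)`-wheel graph equals
the weighted spanning-tree polynomial `𝒲_k(q,t)`. -/
theorem det_wheelLap_eq_treeSum (q t : ℤ) (k : ℕ) [NeZero k] (hk : 3 ≤ k) :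
    (wheelLap q t k).det = wheelTreeSum q t k := by
  have : Fact (1 < k) := ⟨by omega⟩
  obtain ⟨α, β, hs, hp⟩ := exists_add_eq_and_mul_eq (1 + q + t : ℂ) q
  have hfix : ∀ x : ZMod k, Equiv.addRight 1 x ≠ x := by simp
  apply Int.cast_injective (α := ℂ)
  calc ((wheelLap q t k).det : ℂ) = α ^ k + β ^ k - (α * β) ^ k - 1 := by
        rw [Int.cast_det, wheelLap_map_eq q t hk hs hp,
          det_smul_one_sub_smul_permMatrix_sub_permMatrix_inv ZMod.isCycle_addRight_one hfix,
          ZMod.card]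
    _ = ((trace (wheelTransfer q t ^ k) : ℤ) : ℂ) - q ^ k - 1 := by
        rw [trace_wheelTransfer_pow_eq_add_pow q t hs hp (NeZero.ne k), hp]
    _ = wheelTreeSum q t k := by
        rw [trace_wheelTransfer_pow_eq_treeSum]; push_cast; ring
end

section
/- Every critical configuration [c₁,...,c_k] of the dollar game on the (q,t)-wheel graph W_k(q,t) with t ≥ 1 contains at least one entry c_i with 1+q ≤ c_i ≤ q+t. -/
/-! If every entry of a stable configuration `c` were at most `q`, then `c + t` would still be
stable, so no firing could lead from `c + t` back to `c ≠ c + t`, contradicting recurrence. -/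

/-- Firing rim vertex `v` of `W_k(q,t)`. -/
def fire (q t : ℤ) {k : ℕ} [NeZero k] (c : ZMod k → ℤ) (v : ZMod k) : ZMod k → ℤ :=
  fun w => c w - (if w = v then 1 + q + t else 0) + (if w = v + 1 then q else 0) +
    (if w = v - 1 then 1 else 0)

/-- A legal rim-vertex firing step. -/
def FireStep (q t : ℤ) {k : ℕ} [NeZero k] (c c' : ZMod k → ℤ) : Prop :=
  ∃ v, 1 + q + t ≤ c v ∧ c' = fire q t c v

/-- Stability: nonnegative entries, no rim vertex can fire. -/
def Stable (q t : ℤ) {k : ℕ} [NeZero k] (c : ZMod k → ℤ) : Prop :=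
  (∀ v, 0 ≤ c v) ∧ ∀ v, ¬(1 + q + t ≤ c v)

/-- Recurrence: after firing the hub (adding `t` chips to every rim vertex),
some sequence of rim-vertex firings returns to `c`. -/
def Recurrent (q t : ℤ) {k : ℕ} [NeZero k] (c : ZMod k → ℤ) : Prop :=
  Relation.ReflTransGen (FireStep q t) (fun v => c v + t) c

/-- A critical configuration is one that is stable and recurrent. -/
def Critical (q t : ℤ) {k : ℕ} [NeZero k] (c : ZMod k → ℤ) : Prop :=
  Stable q t c ∧ Recurrent q t c

section WheelGraph

variable {q t : ℤ} {k : ℕ} [NeZero k] {c c' : ZMod k → ℤ}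

theorem not_fireStep_of_lt (h : ∀ v, c v < 1 + q + t) : ¬FireStep q t c c' :=
  fun ⟨v, hv, _⟩ => (h v).not_ge hv

theorem Recurrent.exists_gt (ht : 0 < t) (hc : Recurrent q t c) : ∃ v, q < c v := by
  by_contra! hle
  rcases hc.cases_head with hself | ⟨c', hstep, -⟩
  · have := congrFun hself 0
    omega
  · exact not_fireStep_of_lt (fun v => by linarith [hle v]) hstep

end WheelGraph

theorem critical_has_big_entry_general (q t : ℤ) (ht : 1 ≤ t)
    (k : ℕ) [NeZero k] (c : ZMod k → ℤ) (hc : Critical q t c) :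
    ∃ v, 1 + q ≤ c v ∧ c v ≤ q + t := by
  obtain ⟨⟨-, hcannot_fire⟩, hrec⟩ := hc
  obtain ⟨v, hv⟩ := hrec.exists_gt ht
  exact ⟨v, by omega, by linarith [not_le.mp (hcannot_fire v)]⟩

/-- Every critical configuration `[c₁,…,c_k]` of the dollar game on the
`(q,t)`-wheel graph `W_k(q,t)` with `t ≥ 1` has at least one entry `cᵢ` with
`1+q ≤ cᵢ ≤ q+t`. -/
theorem critical_has_big_entry (q t : ℤ) (hq : 0 ≤ q) (ht : 1 ≤ t)
    (k : ℕ) [NeZero k] (hk : 3 ≤ k) (c : ZMod k → ℤ) (hc : Critical q t c) :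
    ∃ v, 1 + q ≤ c v ∧ c v ≤ q + t :=
  critical_has_big_entry_general q t ht k c hc
end

section
/- For k ≥ 3, the cokernel of the k×k circulant matrix circ(1+q+t, −q, 0,...,0, −1) over ℤ (for fixed integers q ≥ 0, t ≥ 1) is isomorphic to the cokernel of the 2×2 integer matrix [[q·F̂_{2k−4} + 1, q·F̂_{2k−2}], [F̂_{2k−2}, F̂_{2k} − 1]]. In particular the critical group of the (q,t)-wheel graph is a product of at most two cyclic groups. -/
/-- The bivariate Fibonacci polynomial `F̂_{2m}(q,t)` (so `Fhat q t m = F̂_{2m}`):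
`F̂_0 = 1`, `F̂_2 = t+1+q`, `F̂_{2m+4} = (1+q+t)F̂_{2m+2} − qF̂_{2m}`. -/
def Fhat (q t : ℤ) : ℕ → ℤ
  | 0 => 1
  | 1 => t + 1 + q
  | (m + 2) => (1 + q + t) * Fhat q t (m + 1) - q * Fhat q t m

/-!
In the cokernel of the circulant, column `j` says `e_{j+1} = (1+q+t) e_j - q e_{j-1}`, so the
classes of the unit vectors `e_n` (indices read mod `k`) form a second-order linear recurrence
and everything is generated by `e_0, e_1`. Running the same recurrence in `ℤ²` from `(-1, 0)`
and `(0, 1)` gives vectors `u_n` whose entries are `F̂`-values; wrapping around, `e_k = e_0` and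
`e_{k+1} = e_1` become exactly the two relations `u_k - u_0` and `u_{k+1} - u_1`, which are the
columns of the `2×2` matrix. Both cokernels thus carry a `k`-periodic recurrence with the same
initial terms, and the maps `e_n ↦ u_n` and `u_n ↦ e_n` descend to mutually inverse isomorphisms.
-/

open Matrix

section LinearRecurrence

variable {R M N : Type*} [Ring R] [AddCommGroup M] [Module R M] [AddCommGroup N] [Module R N]

def IsLinRec2 (c q : R) (x : ℕ → M) : Prop :=
  ∀ n, x (n + 2) = c • x (n + 1) - q • x n

namespace IsLinRec2

variable {c q : R} {x y : ℕ → M}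

theorem map (hx : IsLinRec2 c q x) (f : M →ₗ[R] N) : IsLinRec2 c q (f ∘ x) := fun n => by
  simp [hx n]

theorem eq_of_initial_eq (hx : IsLinRec2 c q x) (hy : IsLinRec2 c q y) (h0 : x 0 = y 0)
    (h1 : x 1 = y 1) : x = y := by
  funext n
  induction n using Nat.twoStepInduction with
  | zero => exact h0
  | one => exact h1
  | more n ih₀ ih₁ => rw [hx, hy, ih₀, ih₁]

theorem periodic {k : ℕ} (hx : IsLinRec2 c q x) (h0 : x k = x 0) (h1 : x (k + 1) = x 1) :
    Function.Periodic x k := by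
  have hshift : IsLinRec2 c q (fun n => x (n + k)) := fun n => by
    simpa only [Nat.add_right_comm] using hx (n + k)
  exact congrFun (hshift.eq_of_initial_eq hx (by simpa using h0) (by simpa [add_comm] using h1))

end IsLinRec2

end LinearRecurrence

theorem Matrix.col_mem_range_mulVecLin {R m n : Type*} [CommSemiring R] [Fintype n]
    (M : Matrix m n R) (j : n) : M.col j ∈ LinearMap.range M.mulVecLin :=
  M.range_mulVecLin ▸ Submodule.subset_span ⟨j, rfl⟩

section Wheel

variable (q t : ℤ)

/-- The coordinates of the class of `e_n` with respect to the generators `-e_0, e_1`; the sign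
makes the relation vectors `u_k - u_0`, `u_{k+1} - u_1` match the matrix of the theorem. -/
def wheelSeq : ℕ → Fin 2 → ℤ
  | 0 => ![-1, 0]
  | 1 => ![0, 1]
  | m + 2 => (1 + q + t) • wheelSeq (m + 1) - q • wheelSeq m

theorem isLinRec2_wheelSeq : IsLinRec2 (1 + q + t) q (wheelSeq q t) := fun _ => rfl

theorem wheelSeq_add_two (m : ℕ) :
    wheelSeq q t (m + 2) = ![q * Fhat q t m, Fhat q t (m + 1)] := by
  have hF : IsLinRec2 (1 + q + t) q fun m => ![q * Fhat q t m, Fhat q t (m + 1)] := fun m => by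
    ext i
    fin_cases i <;> simp [Fhat, mul_sub, mul_left_comm]
  have hshift : IsLinRec2 (1 + q + t) q fun m => wheelSeq q t (m + 2) := fun _ => rfl
  refine congrFun (hshift.eq_of_initial_eq hF ?_ ?_) m <;>
    ext i <;> fin_cases i <;>
    simp only [wheelSeq, Fhat, Pi.sub_apply, Pi.smul_apply, smul_eq_mul, Fin.zero_eta, Fin.mk_one,
      cons_val_zero, cons_val_one] <;> ring

theorem col_twoByTwo (m : ℕ) :
    (!![q * Fhat q t m + 1, q * Fhat q t (m + 1); Fhat q t (m + 1), Fhat q t (m + 2) - 1] :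
      Matrix (Fin 2) (Fin 2) ℤ).col =
      ![wheelSeq q t (m + 2) - wheelSeq q t 0, wheelSeq q t (m + 3) - wheelSeq q t 1] := by
  rw [wheelSeq_add_two, wheelSeq_add_two]
  ext j i
  fin_cases i <;> fin_cases j <;> simp [wheelSeq]

def cokerWheelSeq (B : Matrix (Fin 2) (Fin 2) ℤ) (n : ℕ) :
    (Fin 2 → ℤ) ⧸ LinearMap.range B.mulVecLin :=
  Submodule.mkQ _ (wheelSeq q t n)

variable (k : ℕ)

theorem periodic_cokerWheelSeq {B : Matrix (Fin 2) (Fin 2) ℤ}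
    (hB : B.col = ![wheelSeq q t k - wheelSeq q t 0, wheelSeq q t (k + 1) - wheelSeq q t 1]) :
    Function.Periodic (cokerWheelSeq q t B) k := by
  refine ((isLinRec2_wheelSeq q t).map _).periodic ?_ ?_ <;>
    simp only [Function.comp_apply, Submodule.mkQ_apply, Submodule.Quotient.eq]
  · simpa [hB] using B.col_mem_range_mulVecLin 0
  · simpa [hB] using B.col_mem_range_mulVecLin 1

variable [NeZero k]

theorem col_wheelLap (hk : 3 ≤ k) (j : ZMod k) :
    (wheelLap q t k).col j =
      (1 + q + t) • Pi.single j 1 - q • Pi.single (j - 1) 1 - Pi.single (j + 1) 1 := by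
  have hne : ∀ n : ℕ, 0 < n → n < k → (n : ZMod k) ≠ 0 := fun n h0 hlt h => by
    rw [ZMod.natCast_eq_zero_iff] at h
    exact absurd (Nat.le_of_dvd h0 h) (by omega)
  have h1 : j - 1 ≠ j := fun h => hne 1 one_pos (by omega) (by linear_combination -h)
  have h2 : j + 1 ≠ j := fun h => hne 1 one_pos (by omega) (by linear_combination h)
  have h3 : j + 1 ≠ j - 1 := fun h => hne 2 two_pos (by omega) (by linear_combination h)
  have hsub : ∀ i, j = i + 1 ↔ i = j - 1 := fun i => eq_comm.trans eq_sub_iff_add_eq.symm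
  have hadd : ∀ i, j = i - 1 ↔ i = j + 1 := fun i => eq_sub_iff_add_eq.trans eq_comm
  ext i
  simp only [col_apply, wheelLap, of_apply, hsub, hadd, Pi.sub_apply, Pi.smul_apply,
    Pi.single_apply, smul_eq_mul]
  by_cases hj : i = j
  · subst hj; simp [h1.symm, h2.symm]
  by_cases hj₁ : i = j - 1
  · subst hj₁; simp [h1, h1.symm, h3.symm]
  by_cases hj₂ : i = j + 1
  · subst hj₂; simp [h2, h2.symm, h3]
  simp [hj, Ne.symm hj, hj₁, hj₂]

def cokerSingle (n : ℕ) : (ZMod k → ℤ) ⧸ LinearMap.range (wheelLap q t k).mulVecLin :=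
  Submodule.mkQ _ (Pi.single (n : ZMod k) 1)

theorem isLinRec2_cokerSingle (hk : 3 ≤ k) : IsLinRec2 (1 + q + t) q (cokerSingle q t k) := by
  intro n
  have hcol := (wheelLap q t k).col_mem_range_mulVecLin ((n + 1 : ℕ) : ZMod k)
  have hprev : ((n + 1 : ℕ) : ZMod k) - 1 = n := by push_cast; ring
  have hnext : ((n + 1 : ℕ) : ZMod k) + 1 = (n + 2 : ℕ) := by push_cast; ring
  rw [col_wheelLap q t k hk, hprev, hnext, ← Submodule.Quotient.mk_eq_zero] at hcol
  simp only [Submodule.Quotient.mk_sub, Submodule.Quotient.mk_smul] at hcol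
  simp only [cokerSingle, Submodule.mkQ_apply]
  linear_combination (norm := module) -hcol

def cokerSingleComb :
    (Fin 2 → ℤ) →ₗ[ℤ] (ZMod k → ℤ) ⧸ LinearMap.range (wheelLap q t k).mulVecLin :=
  Fintype.linearCombination ℤ ![-cokerSingle q t k 0, cokerSingle q t k 1]

theorem cokerSingleComb_wheelSeq (hk : 3 ≤ k) (n : ℕ) :
    cokerSingleComb q t k (wheelSeq q t n) = cokerSingle q t k n := by
  refine congrFun (((isLinRec2_wheelSeq q t).map _).eq_of_initial_eq
    (isLinRec2_cokerSingle q t k hk) ?_ ?_) n <;>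
    simp [cokerSingleComb, wheelSeq, Fintype.linearCombination_apply]

def cokerWheelSeqComb (B : Matrix (Fin 2) (Fin 2) ℤ) :
    (ZMod k → ℤ) →ₗ[ℤ] (Fin 2 → ℤ) ⧸ LinearMap.range B.mulVecLin :=
  Fintype.linearCombination ℤ fun a : ZMod k => cokerWheelSeq q t B a.val

theorem cokerWheelSeqComb_single {B : Matrix (Fin 2) (Fin 2) ℤ}
    (hB : B.col = ![wheelSeq q t k - wheelSeq q t 0, wheelSeq q t (k + 1) - wheelSeq q t 1])
    (n : ℕ) : cokerWheelSeqComb q t k B (Pi.single (n : ZMod k) 1) = cokerWheelSeq q t B n := by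
  rw [cokerWheelSeqComb, Fintype.linearCombination_apply_single, one_smul, ZMod.val_natCast,
    (periodic_cokerWheelSeq q t k hB).map_mod_nat]

theorem range_wheelLap_le_ker_cokerWheelSeqComb (hk : 3 ≤ k) {B : Matrix (Fin 2) (Fin 2) ℤ}
    (hB : B.col = ![wheelSeq q t k - wheelSeq q t 0, wheelSeq q t (k + 1) - wheelSeq q t 1]) :
    LinearMap.range (wheelLap q t k).mulVecLin ≤ LinearMap.ker (cokerWheelSeqComb q t k B) := by
  rw [range_mulVecLin, Submodule.span_le]
  rintro _ ⟨j, rfl⟩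
  obtain ⟨n, rfl⟩ : ∃ n : ℕ, ((n + 1 : ℕ) : ZMod k) = j := ⟨j.val + k - 1, by
    rw [Nat.sub_add_cancel (by omega), Nat.cast_add, ZMod.natCast_self, add_zero,
      ZMod.natCast_zmod_val]⟩
  have hprev : ((n + 1 : ℕ) : ZMod k) - 1 = n := by push_cast; ring
  have hnext : ((n + 1 : ℕ) : ZMod k) + 1 = (n + 2 : ℕ) := by push_cast; ring
  have hrec := ((isLinRec2_wheelSeq q t).map (LinearMap.range B.mulVecLin).mkQ) n
  simp only [Function.comp_apply] at hrec
  simp only [SetLike.mem_coe, LinearMap.mem_ker, col_wheelLap q t k hk, hprev, hnext, map_sub,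
    map_smul, cokerWheelSeqComb_single q t k hB, cokerWheelSeq, hrec]
  abel

theorem range_le_ker_cokerSingleComb (hk : 3 ≤ k) {B : Matrix (Fin 2) (Fin 2) ℤ}
    (hB : B.col = ![wheelSeq q t k - wheelSeq q t 0, wheelSeq q t (k + 1) - wheelSeq q t 1]) :
    LinearMap.range B.mulVecLin ≤ LinearMap.ker (cokerSingleComb q t k) := by
  rw [range_mulVecLin, Submodule.span_le]
  rintro _ ⟨j, rfl⟩
  fin_cases j <;> simp [hB, cokerSingleComb_wheelSeq q t k hk, cokerSingle]

def cokerWheelLapEquiv (hk : 3 ≤ k) {B : Matrix (Fin 2) (Fin 2) ℤ}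
    (hB : B.col = ![wheelSeq q t k - wheelSeq q t 0, wheelSeq q t (k + 1) - wheelSeq q t 1]) :
    ((ZMod k → ℤ) ⧸ LinearMap.range (wheelLap q t k).mulVecLin) ≃ₗ[ℤ]
      ((Fin 2 → ℤ) ⧸ LinearMap.range B.mulVecLin) :=
  LinearEquiv.ofLinearMap
    (Submodule.liftQ _ _ (range_wheelLap_le_ker_cokerWheelSeqComb q t k hk hB))
    (Submodule.liftQ _ _ (range_le_ker_cokerSingleComb q t k hk hB))
    (by
      ext i : 3
      fin_cases i <;>
        simp only [LinearMap.comp_apply, Submodule.mkQ_apply, Submodule.liftQ_apply,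
          LinearMap.single_apply, cokerSingleComb, Fintype.linearCombination_apply_single,
          one_smul, Fin.zero_eta, Fin.mk_one, cons_val_zero, cons_val_one, map_neg, cokerSingle,
          LinearMap.id_apply, cokerWheelSeqComb_single q t k hB, cokerWheelSeq, wheelSeq]
      · rw [← Submodule.Quotient.mk_neg]; congr 1; ext j; fin_cases j <;> simp
      · congr 1; ext j; fin_cases j <;> simp)
    (by
      ext a : 3
      simp only [LinearMap.comp_apply, Submodule.mkQ_apply, Submodule.liftQ_apply,
        LinearMap.single_apply, cokerWheelSeqComb, Fintype.linearCombination_apply_single,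
        one_smul, cokerWheelSeq, cokerSingleComb_wheelSeq q t k hk, cokerSingle,
        ZMod.natCast_zmod_val, LinearMap.id_apply])

end Wheel

theorem coker_wheelLap_iso_coker_two_by_two_general (q t : ℤ)
    (k : ℕ) [NeZero k] (hk : 3 ≤ k) :
    Nonempty
      (((ZMod k → ℤ) ⧸ LinearMap.range (wheelLap q t k).mulVecLin) ≃+
        ((Fin 2 → ℤ) ⧸ LinearMap.range
          (!![q * Fhat q t (k - 2) + 1, q * Fhat q t (k - 1);
              Fhat q t (k - 1), Fhat q t k - 1] : Matrix (Fin 2) (Fin 2) ℤ).mulVecLin)) := by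
  obtain ⟨m, rfl⟩ : ∃ m, k = m + 2 := ⟨k - 2, by omega⟩
  rw [Nat.add_sub_cancel, show m + 2 - 1 = m + 1 by omega]
  exact ⟨(cokerWheelLapEquiv q t (m + 2) hk (col_twoByTwo q t m)).toAddEquiv⟩

/-- For `k ≥ 3` and integers `q ≥ 0`, `t ≥ 1`, the cokernel of the circulant
`circ(1+q+t, −q, 0, …, 0, −1)` (the critical group of the `(q,t)`-wheel graph)
is isomorphic to the cokernel of the `2×2` matrix
`[[q·F̂_{2k−4}+1, q·F̂_{2k−2}], [F̂_{2k−2}, F̂_{2k}−1]]`; in particular it is a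
product of at most two cyclic groups. -/
theorem coker_wheelLap_iso_coker_two_by_two (q t : ℤ) (hq : 0 ≤ q) (ht : 1 ≤ t)
    (k : ℕ) [NeZero k] (hk : 3 ≤ k) :
    Nonempty
      (((ZMod k → ℤ) ⧸ LinearMap.range (wheelLap q t k).mulVecLin) ≃+
        ((Fin 2 → ℤ) ⧸ LinearMap.range
          (!![q * Fhat q t (k - 2) + 1, q * Fhat q t (k - 1);
              Fhat q t (k - 1), Fhat q t k - 1] : Matrix (Fin 2) (Fin 2) ℤ).mulVecLin)) :=
  coker_wheelLap_iso_coker_two_by_two_general q t k hk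
end

section
/- Fix integers q ≥ 0, t ≥ 1, k ≥ 1, and let Q_k = 1 + q + q² + ... + q^k. The critical group of the deformed wheel graph W̃_k(q,t) (i.e., W_{k+1}(q,t) with all spokes between the hub and v₁ removed) is cyclic if and only if gcd(t, Q_k) = 1; in general its smaller invariant factor equals gcd(t, Q_k), i.e., the group is isomorphic to ℤ/d₁ℤ × ℤ/(d₁d₂)ℤ with d₁ = gcd(t, Q_k). -/
/-!
Write `e_j` for the rim vertex `j ∈ ZMod (k + 1)`. In the critical group the column of the
Laplacian at a middle vertex `j + 1` says `e_{j+2} = (1 + q + t) e_{j+1} - q e_j`, so every `e_j`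
is the combination `vec j` of `e_0` and `e_1`, and the critical group is `ℤ²` modulo the images of
the two remaining columns, at `k` and at `0`. Modulo `t` this recurrence is the one of the
geometric sums `1 + q + ⋯ + q^(j-1)`, so the four entries of these two relations are `±Q_k`
modulo `t`, while `t` is an integer combination of them: the entries generate
`(t, Q_k) = (gcd(t, Q_k))`. The ideal generated by the entries of a submodule of `ℤ²` does not
change under automorphisms of `ℤ²`, so in Smith normal form `diag(a, a b)` it is `(a)`, and the
quotient is `ℤ/a × ℤ/(a b)` with `|a| = gcd(t, Q_k)`.
-/

/-- The reduced Laplacian of the deformed wheel graph `W̃_k(q,t)` (the graph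
`W_{k+1}(q,t)` with all spokes between the hub and `v₁` removed), indexed by the
`k+1` rim vertices `ZMod (k+1)` (with `v₁` at index `0`): diagonal `1+q` at
`v₁` and `1+q+t` elsewhere, `−q` one step clockwise, `−1` one step
counterclockwise (entries written additively so degenerate small cases merge). -/
def defWheelLap (q t : ℤ) (k : ℕ) : Matrix (ZMod (k + 1)) (ZMod (k + 1)) ℤ :=
  Matrix.of fun i j =>
    (if i = j then (if i = 0 then 1 + q else 1 + q + t) else 0) +
      (if j = i + 1 ∧ j ≠ i then -q else 0) + (if j = i - 1 ∧ j ≠ i then -1 else 0)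

namespace Submodule

open Set

variable {R M M' ι : Type*} [CommRing R] [AddCommGroup M] [Module R M] [AddCommGroup M']
  [Module R M']

theorem mem_pi_span_singleton_iff {c x : ι → R} :
    x ∈ (pi univ fun i => Ideal.span {c i}) ↔ ∀ i, c i ∣ x i := by
  simp [Ideal.mem_span_singleton]

/-- The ideal of all coordinates of `N`, defined without reference to a basis. -/
def contentIdeal (N : Submodule R M) : Ideal R :=
  ⨆ f : M →ₗ[R] R, N.map f

theorem contentIdeal_map_le (N : Submodule R M) (g : M →ₗ[R] M') :
    (N.map g).contentIdeal ≤ N.contentIdeal :=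
  iSup_le fun f => le_iSup_of_le (f ∘ₗ g) (map_comp g f N).ge

theorem contentIdeal_map_linearEquiv (N : Submodule R M) (e : M ≃ₗ[R] M') :
    (N.map (e : M →ₗ[R] M')).contentIdeal = N.contentIdeal := by
  refine le_antisymm (contentIdeal_map_le N _) ?_
  simpa [← map_comp] using contentIdeal_map_le (N.map (e : M →ₗ[R] M')) e.symm.toLinearMap

theorem apply_mem_contentIdeal {N : Submodule R (ι → R)} {x : ι → R} (hx : x ∈ N) (i : ι) :
    x i ∈ N.contentIdeal :=
  le_iSup (fun f : (ι → R) →ₗ[R] R => N.map f) (LinearMap.proj i) ⟨x, hx, rfl⟩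

theorem contentIdeal_le_iff [Fintype ι] {N : Submodule R (ι → R)} {I : Ideal R} :
    N.contentIdeal ≤ I ↔ N ≤ pi univ fun _ => I := by
  refine ⟨fun h x hx i _ => h (apply_mem_contentIdeal hx i), fun h => iSup_le fun f => ?_⟩
  classical
  rintro _ ⟨x, hx, rfl⟩
  rw [LinearMap.pi_apply_eq_sum_univ]
  exact sum_mem fun i _ => I.mul_mem_right _ (h hx i trivial)

theorem contentIdeal_pi_span_singleton [Fintype ι] (c : ι → R) :
    (pi univ fun i => Ideal.span {c i}).contentIdeal = Ideal.span (range c) := by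
  classical
  refine le_antisymm (contentIdeal_le_iff.2 fun x hx i _ => ?_) (Ideal.span_le.2 ?_)
  · exact Ideal.span_mono (singleton_subset_iff.2 (mem_range_self i)) (hx i trivial)
  · rintro _ ⟨i, rfl⟩
    have hsingle : Pi.single i (c i) ∈ pi univ fun i => Ideal.span {c i} := by
      intro j _
      rcases eq_or_ne j i with rfl | hji
      · simp
      · simp [hji]
    simpa using apply_mem_contentIdeal hsingle i

theorem contentIdeal_span_pair (r s : Fin 2 → R) :
    (span R {r, s}).contentIdeal = Ideal.span {r 0, r 1, s 0, s 1} := by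
  refine le_antisymm (contentIdeal_le_iff.2 (span_le.2 ?_)) (Ideal.span_le.2 ?_)
  · rintro x (rfl | rfl) i - <;> fin_cases i <;> exact Ideal.subset_span (by simp)
  · have hr : r ∈ span R {r, s} := subset_span (mem_insert _ _)
    have hs : s ∈ span R {r, s} := subset_span (mem_insert_of_mem _ rfl)
    rintro x (rfl | rfl | rfl | rfl)
    exacts [apply_mem_contentIdeal hr 0, apply_mem_contentIdeal hr 1,
      apply_mem_contentIdeal hs 0, apply_mem_contentIdeal hs 1]

noncomputable def quotEquivMapOfKerLE (p : Submodule R M) (f : M →ₗ[R] M')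
    (hf : Function.Surjective f) (h : LinearMap.ker f ≤ p) : (M ⧸ p) ≃ₗ[R] M' ⧸ p.map f :=
  (quotEquivOfEq _ _ (by rw [LinearMap.ker_comp, ker_mkQ, comap_map_eq_self h])).trans
    (((p.map f).mkQ ∘ₗ f).quotKerEquivOfSurjective ((p.map f).mkQ_surjective.comp hf))

theorem exists_linearEquiv_map_eq_pi_span_singleton [IsDomain R] [IsPrincipalIdealRing R]
    [Finite ι] (N : Submodule R (ι → R)) :
    ∃ (e : (ι → R) ≃ₗ[R] ι → R) (c : ι → R),
      N.map (e : (ι → R) →ₗ[R] ι → R) = pi univ fun i => Ideal.span {c i} := by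
  classical
  have := Fintype.ofFinite ι
  obtain ⟨n, snf⟩ := N.smithNormalForm (Pi.basisFun R ι)
  set c := Function.extend snf.f snf.a 0
  have hc : ∀ j, c (snf.f j) = snf.a j := snf.f.injective.extend_apply _ _
  refine ⟨snf.bM.equivFun, c, le_antisymm ?_ fun x hx => ?_⟩
  · rintro _ ⟨y, hy, rfl⟩ i -
    change _ ∈ Ideal.span {c i}
    rw [Ideal.mem_span_singleton]
    by_cases hi : i ∈ range snf.f
    · obtain ⟨j, rfl⟩ := hi
      have := snf.repr_apply_embedding_eq_repr_smul ⟨y, hy⟩ (i := j)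
      simp only [map_smul, Finsupp.smul_apply, smul_eq_mul] at this
      simp [hc, this]
    · simp [snf.repr_eq_zero_of_notMem_range ⟨y, hy⟩ hi]
  · refine ⟨snf.bM.equivFun.symm x, ?_, snf.bM.equivFun.apply_symm_apply x⟩
    rw [Module.Basis.equivFun_symm_apply]
    refine sum_mem fun i _ => ?_
    obtain ⟨d, hd⟩ := Ideal.mem_span_singleton'.1 (hx i trivial)
    by_cases hi : i ∈ range snf.f
    · obtain ⟨j, rfl⟩ := hi
      rw [← hd, hc, mul_smul, ← snf.snf]
      exact smul_mem _ _ (snf.bN j).2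
    · have hci : c i = 0 := Function.extend_apply' _ _ _ (by simpa using hi)
      simp [← hd, hci]

theorem exists_linearEquiv_map_pi_span_singleton_mul_of_isCoprime {g α β : R}
    (h : IsCoprime α β) :
    ∃ e : (Fin 2 → R) ≃ₗ[R] Fin 2 → R,
      (pi univ fun i => Ideal.span {![g * α, g * β] i}).map (e : (Fin 2 → R) →ₗ[R] Fin 2 → R) =
        pi univ fun i => Ideal.span {![g, g * α * β] i} := by
  obtain ⟨u, v, huv⟩ := h
  set A : Matrix (Fin 2) (Fin 2) R := !![u, v; -β, α]
  have hdet : A.det = 1 := by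
    rw [Matrix.det_fin_two_of]
    linear_combination huv
  let e : (Fin 2 → R) ≃ₗ[R] Fin 2 → R := .ofLinearMap A.mulVecLin A.adjugate.mulVecLin
    (by rw [← Matrix.mulVecLin_mul, Matrix.mul_adjugate, hdet, one_smul, Matrix.mulVecLin_one])
    (by rw [← Matrix.mulVecLin_mul, Matrix.adjugate_mul, hdet, one_smul, Matrix.mulVecLin_one])
  have he (x : Fin 2 → R) : e x = ![u * x 0 + v * x 1, -β * x 0 + α * x 1] := by
    ext i; fin_cases i <;> simp [e, A, Matrix.mulVec, dotProduct]
  have he' (y : Fin 2 → R) : e.symm y = ![α * y 0 - v * y 1, β * y 0 + u * y 1] := by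
    ext i
    fin_cases i <;>
      simp [e, A, Matrix.adjugate_fin_two_of, Matrix.mulVec, dotProduct, sub_eq_add_neg]
  refine ⟨e, le_antisymm ?_ fun y hy => ⟨e.symm y, ?_, e.apply_symm_apply y⟩⟩
  · rintro _ ⟨x, hx, rfl⟩
    simp only [SetLike.mem_coe, mem_pi_span_singleton_iff, Fin.forall_fin_two,
      Matrix.cons_val_zero, Matrix.cons_val_one, LinearEquiv.coe_coe, he] at hx ⊢
    obtain ⟨⟨s, hs⟩, ⟨m, hm⟩⟩ := hx
    rw [hs, hm]
    exact ⟨⟨u * α * s + v * β * m, by ring⟩, ⟨m - s, by ring⟩⟩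
  · simp only [SetLike.mem_coe, mem_pi_span_singleton_iff, Fin.forall_fin_two,
      Matrix.cons_val_zero, Matrix.cons_val_one, he'] at hy ⊢
    obtain ⟨⟨s, hs⟩, ⟨m, hm⟩⟩ := hy
    rw [hs, hm]
    exact ⟨⟨s - v * β * m, by ring⟩, ⟨s + u * α * m, by ring⟩⟩

theorem exists_linearEquiv_map_eq_pi_span_singleton_mul [IsDomain R] [IsPrincipalIdealRing R]
    [GCDMonoid R] (N : Submodule R (Fin 2 → R)) :
    ∃ (e : (Fin 2 → R) ≃ₗ[R] Fin 2 → R) (a b : R),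
      N.map (e : (Fin 2 → R) →ₗ[R] Fin 2 → R) = pi univ fun i => Ideal.span {![a, a * b] i} := by
  obtain ⟨e₁, c, hc⟩ := exists_linearEquiv_map_eq_pi_span_singleton N
  obtain ⟨α, β, hα, hβ, hunit⟩ := extract_gcd (c 0) (c 1)
  generalize gcd (c 0) (c 1) = g at hα hβ
  obtain ⟨e₂, he₂⟩ := exists_linearEquiv_map_pi_span_singleton_mul_of_isCoprime (g := g)
    (gcd_isUnit_iff_isRelPrime.1 hunit).isCoprime
  have hc' : c = ![g * α, g * β] := by
    ext i; fin_cases i <;> simp [hα, hβ]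
  refine ⟨e₁.trans e₂, g, α * β, ?_⟩
  rw [LinearEquiv.coe_trans, map_comp, hc, hc', he₂, mul_assoc]

theorem exists_quotient_addEquiv_zmod_prod (N : Submodule ℤ (Fin 2 → ℤ)) {g : ℕ}
    (hN : N.contentIdeal = Ideal.span {(g : ℤ)}) :
    ∃ d : ℕ, Nonempty (((Fin 2 → ℤ) ⧸ N) ≃+ ZMod g × ZMod (g * d)) := by
  classical
  obtain ⟨e, a, b, he⟩ := exists_linearEquiv_map_eq_pi_span_singleton_mul N
  obtain rfl : a.natAbs = g := by
    have := N.contentIdeal_map_linearEquiv e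
    rw [he, contentIdeal_pi_span_singleton, hN, Matrix.range_cons_cons_empty,
      Ideal.span_pair_eq_span_left_iff_dvd.2 (dvd_mul_right a b),
      Ideal.span_singleton_eq_span_singleton, Int.associated_iff_natAbs] at this
    simpa using this
  let f := (Quotient.equiv N _ e he).trans
    ((quotientPi _).trans (LinearEquiv.piFinTwo ℤ fun i => ℤ ⧸ Ideal.span {![a, a * b] i}))
  let z := (Int.quotientSpanEquivZMod a).toAddEquiv.prodCongr
    ((Int.quotientSpanEquivZMod (a * b)).trans
      (ZMod.ringEquivCongr (Int.natAbs_mul a b))).toAddEquiv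
  exact ⟨b.natAbs, ⟨f.toAddEquiv.trans z⟩⟩

end Submodule

open Finset Matrix

namespace DeformedWheel

variable (q t : ℤ)

def seq : ℕ → ℤ
  | 0 => 0
  | 1 => 1
  | j + 2 => (1 + q + t) * seq (j + 1) - q * seq j

theorem dvd_seq_sub_geom_sum (j : ℕ) : t ∣ seq q t j - ∑ i ∈ range j, q ^ i := by
  induction j using Nat.twoStepInduction with
  | zero => simp [seq]
  | one => simp [seq]
  | more j ih₁ ih₂ =>
    have h : seq q t (j + 2) - ∑ i ∈ range (j + 2), q ^ i =
        (1 + q) * (seq q t (j + 1) - ∑ i ∈ range (j + 1), q ^ i) -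
          q * (seq q t j - ∑ i ∈ range j, q ^ i) + t * seq q t (j + 1) := by
      simp only [seq, sum_range_succ]
      ring
    rw [h]
    exact ((ih₂.mul_left _).sub (ih₁.mul_left _)).add (dvd_mul_right t _)

def vec : ℕ → Fin 2 → ℤ
  | 0 => ![1, 0]
  | j + 1 => ![-q * seq q t j, seq q t (j + 1)]

theorem vec_add_two (j : ℕ) :
    vec q t (j + 2) = (1 + q + t) • vec q t (j + 1) - q • vec q t j := by
  ext i
  fin_cases i <;> rcases j with _ | j <;> simp [vec, seq]; ring

theorem vec_zero : vec q t 0 = ![1, 0] := rfl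

theorem vec_one : vec q t 1 = ![0, 1] := by
  simp [vec, seq]

variable (k : ℕ)

def proj : (ZMod (k + 1) → ℤ) →ₗ[ℤ] Fin 2 → ℤ :=
  Fintype.linearCombination ℤ fun i => vec q t i.val

def lift : (Fin 2 → ℤ) →ₗ[ℤ] ZMod (k + 1) → ℤ :=
  Fintype.linearCombination ℤ ![Pi.single 0 1, Pi.single 1 1]

theorem proj_single (j : ZMod (k + 1)) : proj q t k (Pi.single j 1) = vec q t j.val := by
  simp [proj, Fintype.linearCombination_apply_single]

theorem proj_single_natCast (m : ℕ) :
    proj q t k (Pi.single (m : ZMod (k + 1)) 1) = vec q t (m % (k + 1)) := by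
  rw [proj_single, ZMod.val_natCast]

variable [Fact (1 < k + 1)]

theorem proj_lift (x : Fin 2 → ℤ) : proj q t k (lift k x) = x := by
  rw [lift, Fintype.linearCombination_apply, Fin.sum_univ_two, map_add, map_smul, map_smul]
  simp only [cons_val_zero, cons_val_one, proj_single, ZMod.val_zero, ZMod.val_one, vec_zero,
    vec_one]
  ext i
  fin_cases i <;> simp

theorem defWheelLap_mulVec_single (j : ZMod (k + 1)) :
    defWheelLap q t k *ᵥ Pi.single j 1 =
      (if j = 0 then 1 + q else 1 + q + t) • Pi.single j 1 - q • Pi.single (j - 1) 1 -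
        Pi.single (j + 1) 1 := by
  ext i
  have h₁ : j - 1 ≠ j := by simp
  have h₂ : j + 1 ≠ j := by simp
  simp only [defWheelLap, mulVec_single_one, col_apply, of_apply, Pi.sub_apply, Pi.smul_apply,
    Pi.single_apply]
  have e₁ : (j = i + 1 ∧ j ≠ i) ↔ i = j - 1 :=
    ⟨fun h => eq_sub_of_add_eq h.1.symm, by rintro rfl; exact ⟨by ring, h₁.symm⟩⟩
  have e₂ : (j = i - 1 ∧ j ≠ i) ↔ i = j + 1 :=
    ⟨fun h => eq_add_of_sub_eq h.1.symm, by rintro rfl; exact ⟨by ring, h₂.symm⟩⟩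
  rw [if_congr e₁ rfl rfl, if_congr e₂ rfl rfl]
  rcases eq_or_ne i j with rfl | hij
  · simp [h₁.symm, h₂.symm]
  · simp only [hij, if_false]
    split_ifs <;> simp [sub_eq_add_neg]

theorem defWheelLap_mulVec_single_natCast_succ (m : ℕ) (hm : m + 1 ≤ k) :
    defWheelLap q t k *ᵥ Pi.single ((m + 1 : ℕ) : ZMod (k + 1)) 1 =
      (1 + q + t) • Pi.single ((m + 1 : ℕ) : ZMod (k + 1)) 1 -
        q • Pi.single (m : ZMod (k + 1)) 1 - Pi.single ((m + 2 : ℕ) : ZMod (k + 1)) 1 := by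
  have hne : ((m + 1 : ℕ) : ZMod (k + 1)) ≠ 0 := by
    rw [Ne, ZMod.natCast_eq_zero_iff]
    exact Nat.not_dvd_of_pos_of_lt m.succ_pos (by omega)
  rw [defWheelLap_mulVec_single, if_neg hne]
  push_cast
  ring_nf

theorem proj_mulVec_single_zero :
    proj q t k (defWheelLap q t k *ᵥ Pi.single 0 1) =
      (1 + q) • vec q t 0 - q • vec q t k - vec q t 1 := by
  rw [defWheelLap_mulVec_single, if_pos rfl, zero_sub, zero_add, map_sub, map_sub, map_smul,
    map_smul, proj_single, proj_single, proj_single, ZMod.val_zero, ZMod.val_neg_one, ZMod.val_one]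

theorem proj_mulVec_single_natCast_succ (m : ℕ) (hm : m + 1 ≤ k) :
    proj q t k (defWheelLap q t k *ᵥ Pi.single ((m + 1 : ℕ) : ZMod (k + 1)) 1) =
      vec q t (m + 2) - vec q t ((m + 2) % (k + 1)) := by
  rw [defWheelLap_mulVec_single_natCast_succ q t k m hm, map_sub, map_sub, map_smul, map_smul,
    proj_single_natCast, proj_single_natCast, proj_single_natCast,
    Nat.mod_eq_of_lt (by omega : m + 1 < k + 1), Nat.mod_eq_of_lt (by omega : m < k + 1),
    vec_add_two]

theorem single_sub_lift_vec_mem_range (m : ℕ) (hm : m ≤ k) :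
    Pi.single (m : ZMod (k + 1)) 1 - lift k (vec q t m) ∈
      LinearMap.range (defWheelLap q t k).mulVecLin := by
  induction m using Nat.twoStepInduction with
  | zero => simp [lift, Fintype.linearCombination_apply, vec_zero]
  | one => simp [lift, Fintype.linearCombination_apply, vec_one]
  | more m ih₁ ih₂ =>
    have h : Pi.single ((m + 2 : ℕ) : ZMod (k + 1)) 1 - lift k (vec q t (m + 2)) =
        (1 + q + t) • (Pi.single ((m + 1 : ℕ) : ZMod (k + 1)) 1 - lift k (vec q t (m + 1))) -
          q • (Pi.single (m : ZMod (k + 1)) 1 - lift k (vec q t m)) -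
          defWheelLap q t k *ᵥ Pi.single ((m + 1 : ℕ) : ZMod (k + 1)) 1 := by
      rw [defWheelLap_mulVec_single_natCast_succ q t k m (by omega), vec_add_two, map_sub,
        map_smul, map_smul]
      module
    rw [h]
    exact sub_mem (sub_mem (Submodule.smul_mem _ _ (ih₂ (by omega)))
      (Submodule.smul_mem _ _ (ih₁ (by omega)))) ⟨_, rfl⟩

theorem ker_proj_le_range :
    LinearMap.ker (proj q t k) ≤ LinearMap.range (defWheelLap q t k).mulVecLin := by
  have h : LinearMap.range (LinearMap.id - lift k ∘ₗ proj q t k) ≤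
      LinearMap.range (defWheelLap q t k).mulVecLin := by
    rw [LinearMap.range_eq_map, ← (Pi.basisFun ℤ _).span_eq, Submodule.map_span,
      Submodule.span_le]
    rintro _ ⟨_, ⟨j, rfl⟩, rfl⟩
    have := single_sub_lift_vec_mem_range q t k j.val (by have := j.val_lt; omega)
    rw [ZMod.natCast_zmod_val] at this
    simpa [proj_single] using this
  intro x hx
  simpa [LinearMap.mem_ker.1 hx] using h ⟨x, rfl⟩

def relations : Submodule ℤ (Fin 2 → ℤ) :=
  Submodule.span ℤ {vec q t (k + 1) - vec q t 0, (1 + q) • vec q t 0 - q • vec q t k - vec q t 1}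

theorem map_proj_range_eq_relations :
    (LinearMap.range (defWheelLap q t k).mulVecLin).map (proj q t k) = relations q t k := by
  have hk : 1 ≤ k := Nat.lt_succ_iff.1 Fact.out
  rw [range_mulVecLin, Submodule.map_span, relations]
  refine le_antisymm (Submodule.span_le.2 ?_) (Submodule.span_le.2 ?_)
  · rintro _ ⟨_, ⟨j, rfl⟩, rfl⟩
    rw [← mulVec_single_one, ← ZMod.natCast_zmod_val j]
    have hj := j.val_lt
    generalize j.val = m at hj ⊢
    rcases m with _ | m
    · rw [Nat.cast_zero, proj_mulVec_single_zero]
      exact Submodule.subset_span (Set.mem_insert_of_mem _ rfl)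
    rw [proj_mulVec_single_natCast_succ q t k m (by omega)]
    rcases (show m + 2 ≤ k ∨ m + 1 = k by omega) with h | rfl
    · rw [Nat.mod_eq_of_lt (by omega), sub_self]
      exact zero_mem _
    · rw [Nat.mod_self]
      exact Submodule.subset_span (Set.mem_insert _ _)
  · obtain ⟨m, rfl⟩ : ∃ m, k = m + 1 := ⟨k - 1, by omega⟩
    rintro _ (rfl | rfl)
    · refine Submodule.subset_span ⟨_, ⟨((m + 1 : ℕ) : ZMod (m + 1 + 1)), rfl⟩, ?_⟩
      rw [← mulVec_single_one, proj_mulVec_single_natCast_succ q t _ m le_rfl, Nat.mod_self]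
    · refine Submodule.subset_span ⟨_, ⟨0, rfl⟩, ?_⟩
      rw [← mulVec_single_one, proj_mulVec_single_zero]

theorem relations_succ (m : ℕ) :
    relations q t (m + 1) = Submodule.span ℤ
      {![-(q * seq q t (m + 1)) - 1, seq q t (m + 2)],
        ![1 + q + q * (q * seq q t m), -(q * seq q t (m + 1)) - 1]} := by
  rw [relations]
  congr 3
  · ext i; fin_cases i <;> simp [vec]
  · ext i; fin_cases i <;> simp [vec, seq]

theorem span_relation_entries_eq_span_gcd (m : ℕ) :
    Ideal.span {-(q * seq q t (m + 1)) - 1, seq q t (m + 2), 1 + q + q * (q * seq q t m),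
      -(q * seq q t (m + 1)) - 1} = Ideal.span {(Int.gcd t (∑ i ∈ range (m + 2), q ^ i) : ℤ)} := by
  have hQ₁ : ∑ i ∈ range (m + 2), q ^ i = q * ∑ i ∈ range (m + 1), q ^ i + 1 := geom_sum_succ
  have hQ₂ : ∑ i ∈ range (m + 2), q ^ i = q * (q * ∑ i ∈ range m, q ^ i + 1) + 1 := by
    rw [hQ₁, geom_sum_succ]
  obtain ⟨c₀, hc₀⟩ := dvd_seq_sub_geom_sum q t m
  obtain ⟨c₁, hc₁⟩ := dvd_seq_sub_geom_sum q t (m + 1)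
  obtain ⟨c₂, hc₂⟩ := dvd_seq_sub_geom_sum q t (m + 2)
  generalize ∑ i ∈ range (m + 2), q ^ i = Q at hQ₁ hQ₂ hc₂ ⊢
  apply le_antisymm
  · obtain ⟨a, ha⟩ : (Int.gcd t Q : ℤ) ∣ t := Int.gcd_dvd_left t Q
    obtain ⟨b, hb⟩ : (Int.gcd t Q : ℤ) ∣ Q := Int.gcd_dvd_right t Q
    have h₀ : (Int.gcd t Q : ℤ) ∣ -(q * seq q t (m + 1)) - 1 :=
      ⟨-q * a * c₁ - b, by linear_combination -q * hc₁ - hb + hQ₁ - q * c₁ * ha⟩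
    have h₁ : (Int.gcd t Q : ℤ) ∣ seq q t (m + 2) :=
      ⟨a * c₂ + b, by linear_combination hc₂ + hb + c₂ * ha⟩
    have h₂ : (Int.gcd t Q : ℤ) ∣ 1 + q + q * (q * seq q t m) :=
      ⟨q ^ 2 * a * c₀ + b, by linear_combination q ^ 2 * hc₀ + hb - hQ₂ + q ^ 2 * c₀ * ha⟩
    rw [Ideal.span_le]
    rintro x (rfl | rfl | rfl | rfl) <;> rw [SetLike.mem_coe, Ideal.mem_span_singleton] <;>
      assumption
  · set I := Ideal.span {-(q * seq q t (m + 1)) - 1, seq q t (m + 2),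
      1 + q + q * (q * seq q t m), -(q * seq q t (m + 1)) - 1}
    have e₀ : -(q * seq q t (m + 1)) - 1 ∈ I := Ideal.subset_span (by simp)
    have e₁ : seq q t (m + 2) ∈ I := Ideal.subset_span (by simp)
    have e₂ : 1 + q + q * (q * seq q t m) ∈ I := Ideal.subset_span (by simp)
    have ht : t ∈ I := by
      rw [show t = -((1 + q + t) * (-(q * seq q t (m + 1)) - 1) +
          (1 + q + q * (q * seq q t m)) + q * seq q t (m + 2)) by rw [seq]; ring]
      exact I.neg_mem (I.add_mem (I.add_mem (I.mul_mem_left _ e₀) e₂) (I.mul_mem_left _ e₁))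
    have hQ : Q ∈ I := by
      rw [show Q = seq q t (m + 2) - t * c₂ by linear_combination -hc₂]
      exact I.sub_mem e₁ (I.mul_mem_right _ ht)
    rw [Ideal.span_singleton_le_iff_mem, Int.gcd_eq_gcd_ab]
    exact I.add_mem (I.mul_mem_right _ ht) (I.mul_mem_right _ hQ)

theorem contentIdeal_relations (hk : 1 ≤ k) :
    (relations q t k).contentIdeal =
      Ideal.span {(Int.gcd t (∑ i ∈ range (k + 1), q ^ i) : ℤ)} := by
  obtain ⟨m, rfl⟩ : ∃ m, k = m + 1 := ⟨k - 1, by omega⟩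
  rw [relations_succ, Submodule.contentIdeal_span_pair]
  exact span_relation_entries_eq_span_gcd q t m

end DeformedWheel

theorem critical_group_deformed_wheel_general (q t : ℤ) (k : ℕ) (hk : 1 ≤ k) :
    ∃ d₂ : ℕ, Nonempty
      (((ZMod (k + 1) → ℤ) ⧸ LinearMap.range (defWheelLap q t k).mulVecLin) ≃+
        (ZMod (Int.gcd t (∑ i ∈ Finset.range (k + 1), q ^ i)) ×
          ZMod (Int.gcd t (∑ i ∈ Finset.range (k + 1), q ^ i) * d₂))) := by
  have : Fact (1 < k + 1) := ⟨by omega⟩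
  let e := (Submodule.quotEquivMapOfKerLE _ (DeformedWheel.proj q t k)
      (fun x => ⟨_, DeformedWheel.proj_lift q t k x⟩) (DeformedWheel.ker_proj_le_range q t k)).trans
    (Submodule.quotEquivOfEq _ _ (DeformedWheel.map_proj_range_eq_relations q t k))
  obtain ⟨d₂, ⟨f⟩⟩ := Submodule.exists_quotient_addEquiv_zmod_prod _
    (DeformedWheel.contentIdeal_relations q t k hk)
  exact ⟨d₂, ⟨e.toAddEquiv.trans f⟩⟩

/-- For integers `q ≥ 0`, `t ≥ 1`, `k ≥ 1` and `Q_k = 1 + q + ⋯ + q^k`, the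
critical group of the deformed wheel graph `W̃_k(q,t)` is isomorphic to
`ℤ/d₁ℤ × ℤ/(d₁d₂)ℤ` with smaller invariant factor `d₁ = gcd(t, Q_k)`; in
particular it is cyclic iff `gcd(t, Q_k) = 1`. -/
theorem critical_group_deformed_wheel (q t : ℤ) (hq : 0 ≤ q) (ht : 1 ≤ t)
    (k : ℕ) (hk : 1 ≤ k) :
    ∃ d₂ : ℕ, Nonempty
      (((ZMod (k + 1) → ℤ) ⧸ LinearMap.range (defWheelLap q t k).mulVecLin) ≃+
        (ZMod (Int.gcd t (∑ i ∈ Finset.range (k + 1), q ^ i)) ×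
          ZMod (Int.gcd t (∑ i ∈ Finset.range (k + 1), q ^ i) * d₂))) :=
  critical_group_deformed_wheel_general q t k hk
end

section
/- If k₁ divides k₂, the periodic-extension map sending a configuration (c₁,...,c_{k₁}) ∈ ℤ^{k₁} to its (k₂/k₁)-fold repetition in ℤ^{k₂} induces an injective group homomorphism from K(W_{k₁}(q,t)) = ℤ^{k₁}/Im(L₀^{(k₁)}) to K(W_{k₂}(q,t)) = ℤ^{k₂}/Im(L₀^{(k₂)}), where L₀^{(k)} = circ_k(1+q+t, −q, 0,...,0, −1). Moreover, the image of this embedding equals the kernel of (1 − ρ^{k₁}) acting on K(W_{k₂}(q,t)), where ρ is the coordinate shift. -/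
/-!
Write `L'` and `L` for the Laplacians of sizes `k₁` and `k₂`, `S = ρ^{k₁}` and `P` for periodic
extension. `L` is strictly diagonally dominant, hence injective; it commutes with `S`, satisfies
`L P = P L'`, and the image of `P` is exactly the space of `S`-fixed vectors.
Injectivity: if `P c = L x` then `L (S x - x) = 0`, so `x` is periodic, `x = P y` and `c = L' y`.
Image: if `(1 - S) c = L x`, the norm `1 + S + ⋯ + S^{m-1}` (`m = k₂ / k₁`) kills `(1 - S) c`,
hence `x`; on the free `ℤ[S]`-module `ℤ^{k₂}` the kernel of the norm is the image of `1 - S`, so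
`x = (1 - S) z`, and then `c - L z` is periodic.
-/

open Function LinearMap Finset Matrix

section Cokernel

variable {R M₁ M₂ : Type*} [Ring R] [AddCommGroup M₁] [Module R M₁] [AddCommGroup M₂]
  [Module R M₂] {L₁ : M₁ →ₗ[R] M₁} {L₂ S T : M₂ →ₗ[R] M₂} {P : M₁ →ₗ[R] M₂}

theorem range_le_comap_range_of_comp_eq (h : L₂ ∘ₗ P = P ∘ₗ L₁) :
    range L₁ ≤ (range L₂).comap P := by
  rintro _ ⟨x, rfl⟩
  exact ⟨P x, LinearMap.congr_fun h x⟩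

theorem mapQ_range_injective (hL₂ : Injective L₂) (hP : Injective P)
    (h : L₂ ∘ₗ P = P ∘ₗ L₁) (hS : Commute S L₂) (hPS : range P = ker (1 - S)) :
    Injective ((range L₁).mapQ (range L₂) P (range_le_comap_range_of_comp_eq h)) := by
  refine (injective_iff_map_eq_zero _).2 fun w hw => ?_
  induction w using Submodule.Quotient.induction_on with | _ c => ?_
  rw [Submodule.mapQ_apply, Submodule.Quotient.mk_eq_zero] at hw
  rw [Submodule.Quotient.mk_eq_zero]
  obtain ⟨x, hx⟩ := hw
  have hPc : (1 - S) (P c) = 0 := mem_ker.1 (hPS ▸ mem_range_self P c)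
  have hx_fixed : (1 - S) x = 0 := hL₂ <| by
    rw [← Module.End.mul_apply, ← ((Commute.one_left L₂).sub_left hS).eq, Module.End.mul_apply,
      hx, hPc, map_zero]
  obtain ⟨y, rfl⟩ : x ∈ range P := hPS ▸ hx_fixed
  exact ⟨y, hP ((LinearMap.congr_fun h y).symm.trans hx)⟩

theorem range_mapQ_range_eq_ker (hL₂ : Injective L₂) (h : L₂ ∘ₗ P = P ∘ₗ L₁)
    (hS : Commute S L₂) (hPS : range P = ker (1 - S)) (hT : Commute T L₂)
    (hTS : ker T = range (1 - S)) :
    range ((range L₁).mapQ (range L₂) P (range_le_comap_range_of_comp_eq h)) =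
      ker ((range L₂).mapQ (range L₂) (1 - S)
        (range_le_comap_range_of_comp_eq ((Commute.one_left L₂).sub_left hS).eq.symm)) := by
  have hS' : Commute (1 - S) L₂ := (Commute.one_left L₂).sub_left hS
  apply le_antisymm
  · rintro _ ⟨w, rfl⟩
    induction w using Submodule.Quotient.induction_on with | _ c => ?_
    rw [mem_ker, Submodule.mapQ_apply, Submodule.mapQ_apply,
      mem_ker.1 (hPS ▸ mem_range_self P c : P c ∈ ker (1 - S)), Submodule.Quotient.mk_zero]
  · intro w hw
    induction w using Submodule.Quotient.induction_on with | _ c => ?_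
    rw [mem_ker, Submodule.mapQ_apply, Submodule.Quotient.mk_eq_zero] at hw
    obtain ⟨x, hx⟩ := hw
    have hTx : T x = 0 := hL₂ <| by
      rw [← Module.End.mul_apply, ← hT.eq, Module.End.mul_apply, hx, map_zero,
        mem_ker.1 (hTS ▸ mem_range_self (1 - S) c : (1 - S) c ∈ ker T)]
    obtain ⟨z, rfl⟩ : x ∈ range (1 - S) := hTS ▸ hTx
    obtain ⟨y, hy⟩ : c - L₂ z ∈ range P := hPS ▸ show (1 - S) (c - L₂ z) = 0 by
      rw [map_sub, ← hx, ← Module.End.mul_apply, ← hS'.eq, Module.End.mul_apply, sub_self]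
    refine ⟨Submodule.Quotient.mk y, ?_⟩
    rw [Submodule.mapQ_apply, Submodule.Quotient.eq, hy, sub_sub_cancel_left, ← map_neg]
    exact mem_range_self L₂ (-z)

end Cokernel

section Shift

variable (R M : Type*) [Semiring R] [AddCommGroup M] [Module R M]

/-- On `ZMod k → M`, `shiftBy R M 1` is the coordinate shift `ρ` and `shiftBy R M a = ρ ^ a`. -/
def shiftBy {G : Type*} [Add G] (a : G) : Module.End R (G → M) :=
  funLeft R M (· + a)

variable {R M}

@[simp]
theorem shiftBy_apply {G : Type*} [Add G] (a : G) (x : G → M) (v : G) :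
    shiftBy R M a x v = x (v + a) :=
  rfl

theorem shiftBy_zero {G : Type*} [AddMonoid G] : shiftBy R M (0 : G) = 1 := by
  ext x v
  simp

theorem shiftBy_pow {G : Type*} [AddMonoid G] (a : G) (n : ℕ) :
    shiftBy R M a ^ n = shiftBy R M (n • a) := by
  induction n with
  | zero => rw [pow_zero, zero_smul, shiftBy_zero]
  | succ n ih =>
    ext x v
    rw [pow_succ, Module.End.mul_apply, ih, shiftBy_apply, shiftBy_apply, shiftBy_apply,
      add_assoc, succ_nsmul]

theorem range_funLeft_castHom {a N : ℕ} [NeZero N] (h : a ∣ N) :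
    range (funLeft R M (ZMod.castHom h (ZMod a))) = ker (1 - shiftBy R M (a : ZMod N)) := by
  apply le_antisymm
  · rintro _ ⟨y, rfl⟩
    refine mem_ker.2 (funext fun v => ?_)
    rw [LinearMap.sub_apply, Module.End.one_apply, Pi.sub_apply, shiftBy_apply, funLeft_apply,
      funLeft_apply, map_add, map_natCast, ZMod.natCast_self, add_zero, sub_self, Pi.zero_apply]
  · intro x hx
    have hper : Periodic x (a : ZMod N) := fun v => by
      simpa [sub_eq_zero, eq_comm] using congr_fun hx v
    refine ⟨fun u => x u.val, funext fun v => ?_⟩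
    have hv : v = ((v.val % a : ℕ) : ZMod N) + ((v.val / a : ℕ) * (a : ZMod N)) := by
      rw [← Nat.cast_mul, ← Nat.cast_add, Nat.mod_add_div', ZMod.natCast_zmod_val]
    rw [funLeft_apply, ← ZMod.natCast_zmod_val v, map_natCast, ZMod.val_natCast]
    conv_rhs => rw [ZMod.natCast_zmod_val v, hv, hper.nat_mul]

/-- `Z n` is minus the sum of `X` over the points of `n + aℕ` below `n`; it is `m a`-periodic
because the block sums of `X` vanish. -/
theorem exists_periodic_sub_add_eq {a m : ℕ} (ha : 0 < a) (X : ℕ → M)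
    (hX : ∀ n, ∑ j ∈ range m, X (n + j * a) = 0) :
    ∃ Z : ℕ → M, Periodic Z (m * a) ∧ ∀ n, Z n - Z (n + a) = X n := by
  refine ⟨fun n => -∑ i ∈ range (n / a), X (n % a + i * a), fun n => ?_, fun n => ?_⟩
  · have hblock : ∑ i ∈ range m, X (n % a + (n / a + i) * a) = 0 := by
      simpa only [add_mul, ← add_assoc, Nat.mod_add_div'] using hX n
    simp only
    rw [Nat.add_mul_div_right _ _ ha, Nat.add_mul_mod_self_right, sum_range_add, hblock, add_zero]
  · simp only
    rw [Nat.add_div_right _ ha, Nat.add_mod_right, sum_range_succ, Nat.mod_add_div']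
    abel

theorem ker_sum_pow_shiftBy {a m N : ℕ} [NeZero N] (h : m * a = N) :
    ker (∑ j ∈ range m, shiftBy R M (a : ZMod N) ^ j) = range (1 - shiftBy R M (a : ZMod N)) := by
  apply le_antisymm
  · intro x hx
    have ha : 0 < a := Nat.pos_of_ne_zero fun ha => NeZero.ne N (by rw [← h, ha, mul_zero])
    have hsum : ∀ n : ℕ, ∑ j ∈ range m, x ((n + j * a : ℕ) : ZMod N) = 0 := fun n => by
      simpa [shiftBy_pow] using congr_fun (mem_ker.1 hx) n
    obtain ⟨Z, hZ, hZx⟩ := exists_periodic_sub_add_eq ha (fun n => x n) hsum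
    rw [h] at hZ
    refine ⟨fun v => Z v.val, funext fun v => ?_⟩
    calc Z v.val - Z (v + a).val = Z v.val - Z (v.val + a) := by
          rw [← hZ.map_mod_nat (v.val + a), ← ZMod.val_natCast, Nat.cast_add,
            ZMod.natCast_zmod_val]
      _ = x v := by rw [hZx, ZMod.natCast_zmod_val]
  · rw [LinearMap.range_le_ker_iff, ← Module.End.mul_eq_comp, geom_sum_mul_neg, shiftBy_pow,
      nsmul_eq_mul, ← Nat.cast_mul, h, ZMod.natCast_self, shiftBy_zero, sub_self]

end Shift

section WheelLap

variable {q t : ℤ} {k : ℕ} [NeZero k]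

theorem wheelLap_mulVec_apply (hk : 3 ≤ k) (c : ZMod k → ℤ) (i : ZMod k) :
    (wheelLap q t k *ᵥ c) i = (1 + q + t) * c i - q * c (i + 1) - c (i - 1) := by
  have hne : ∀ n : ℕ, 0 < n → n < k → (n : ZMod k) ≠ 0 := fun n h0 hn => by
    rw [Ne, ZMod.natCast_eq_zero_iff]
    exact Nat.not_dvd_of_pos_of_lt h0 hn
  have h1 : (1 : ZMod k) ≠ 0 := by exact_mod_cast hne 1 (by omega) (by omega)
  have h2 : (2 : ZMod k) ≠ 0 := by exact_mod_cast hne 2 (by omega) (by omega)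
  have hne1 : i + 1 ≠ i := fun h => h1 (by linear_combination h)
  have hne2 : i - 1 ≠ i := fun h => h1 (by linear_combination -h)
  have hne3 : i + 1 ≠ i - 1 := fun h => h2 (by linear_combination h)
  have hrow : wheelLap q t k i =
      (1 + q + t) • Pi.single i 1 - q • Pi.single (i + 1) 1 - Pi.single (i - 1) 1 := by
    ext j
    simp only [wheelLap, Matrix.of_apply, Pi.sub_apply, Pi.smul_apply, Pi.single_apply,
      smul_eq_mul]
    grind
  change wheelLap q t k i ⬝ᵥ c = _
  rw [hrow, sub_dotProduct, sub_dotProduct, smul_dotProduct, smul_dotProduct, single_dotProduct,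
    single_dotProduct, single_dotProduct, smul_eq_mul, smul_eq_mul, one_mul, one_mul, one_mul]

theorem commute_shiftBy_wheelLap (hk : 3 ≤ k) (a : ZMod k) :
    Commute (shiftBy ℤ ℤ a) (wheelLap q t k).mulVecLin := by
  refine LinearMap.ext fun x => funext fun v => ?_
  simp only [Module.End.mul_apply, shiftBy_apply, mulVecLin_apply, wheelLap_mulVec_apply hk,
    add_right_comm v, sub_add_eq_add_sub]

theorem wheelLap_comp_funLeft_castHom {k₁ k₂ : ℕ} [NeZero k₁] [NeZero k₂] (hk₁ : 3 ≤ k₁)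
    (hk₂ : 3 ≤ k₂) (h : k₁ ∣ k₂) :
    (wheelLap q t k₂).mulVecLin ∘ₗ funLeft ℤ ℤ (ZMod.castHom h (ZMod k₁)) =
      funLeft ℤ ℤ (ZMod.castHom h (ZMod k₁)) ∘ₗ (wheelLap q t k₁).mulVecLin := by
  ext x v
  simp only [LinearMap.comp_apply, funLeft_apply, mulVecLin_apply, wheelLap_mulVec_apply hk₁,
    wheelLap_mulVec_apply hk₂, map_add, map_sub, map_one]

theorem wheelLap_mulVecLin_injective (hq : 0 ≤ q) (ht : 1 ≤ t) (hk : 3 ≤ k) :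
    Injective (wheelLap q t k).mulVecLin := by
  refine (injective_iff_map_eq_zero _).2 fun c hc => ?_
  obtain ⟨i, -, hi⟩ := univ.exists_max_image (fun j => |c j|) univ_nonempty
  replace hi : ∀ j, |c j| ≤ |c i| := fun j => hi j (mem_univ j)
  have hci : (1 + q + t) * c i = q * c (i + 1) + c (i - 1) := by
    have := congr_fun hc i
    rw [mulVecLin_apply, wheelLap_mulVec_apply hk, Pi.zero_apply] at this
    linarith
  have hmax : (1 + q + t) * |c i| ≤ (q + 1) * |c i| := calc
    (1 + q + t) * |c i| = |q * c (i + 1) + c (i - 1)| := by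
      rw [← hci, abs_mul, abs_of_pos (show 0 < 1 + q + t by linarith)]
    _ ≤ q * |c (i + 1)| + |c (i - 1)| := by
      rw [← abs_of_nonneg hq, ← abs_mul, abs_of_nonneg hq]
      exact abs_add_le _ _
    _ ≤ (q + 1) * |c i| := by nlinarith [hi (i + 1), hi (i - 1)]
  have hzero : |c i| = 0 := by nlinarith [abs_nonneg (c i)]
  ext j
  exact abs_nonpos_iff.1 (hzero ▸ hi j)

end WheelLap

/-- If `k₁ ∣ k₂`, the periodic-extension map sending `(c₁,…,c_{k₁})` to its
`(k₂/k₁)`-fold repetition induces an injective group homomorphism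
`φ : K(W_{k₁}(q,t)) → K(W_{k₂}(q,t))` between the cokernels of the reduced
Laplacians, whose image equals the kernel of the endomorphism `1 − ρ^{k₁}` of
`K(W_{k₂}(q,t))`, where `ρ` is the coordinate shift. -/
theorem periodic_extension_embedding (q t : ℤ) (hq : 0 ≤ q) (ht : 1 ≤ t)
    (k₁ k₂ : ℕ) [NeZero k₁] [NeZero k₂] (hk₁ : 3 ≤ k₁) (hk₂ : 3 ≤ k₂)
    (hdvd : k₁ ∣ k₂) :
    ∃ φ : ((ZMod k₁ → ℤ) ⧸ LinearMap.range (wheelLap q t k₁).mulVecLin) →ₗ[ℤ]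
        ((ZMod k₂ → ℤ) ⧸ LinearMap.range (wheelLap q t k₂).mulVecLin),
      ∃ δ : ((ZMod k₂ → ℤ) ⧸ LinearMap.range (wheelLap q t k₂).mulVecLin) →ₗ[ℤ]
          ((ZMod k₂ → ℤ) ⧸ LinearMap.range (wheelLap q t k₂).mulVecLin),
        (∀ c : ZMod k₁ → ℤ, φ (Submodule.Quotient.mk c) =
            Submodule.Quotient.mk (fun v => c (ZMod.castHom hdvd (ZMod k₁) v))) ∧
        (∀ c : ZMod k₂ → ℤ, δ (Submodule.Quotient.mk c) =
            Submodule.Quotient.mk (fun v => c v - c (v + (k₁ : ZMod k₂)))) ∧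
        Function.Injective φ ∧ LinearMap.range φ = LinearMap.ker δ := by
  have hS := commute_shiftBy_wheelLap (q := q) (t := t) hk₂ (k₁ : ZMod k₂)
  have hL₂ := wheelLap_mulVecLin_injective hq ht hk₂
  have hPL := wheelLap_comp_funLeft_castHom (q := q) (t := t) hk₁ hk₂ hdvd
  have hP := funLeft_injective_of_surjective ℤ ℤ _ (ZMod.castHom_surjective hdvd)
  have hPS := range_funLeft_castHom (R := ℤ) (M := ℤ) hdvd
  have hTS := ker_sum_pow_shiftBy (R := ℤ) (M := ℤ) (Nat.div_mul_cancel hdvd)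
  have hT := Commute.sum_left _ _ _ fun j (_ : j ∈ range (k₂ / k₁)) => hS.pow_left j
  exact ⟨_, _, fun c => rfl, fun c => rfl, mapQ_range_injective hL₂ hP hPL hS hPS,
    range_mapQ_range_eq_ker hL₂ hPL hS hPS hT hTS⟩
end
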